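/- arXiv:math/0204353 — 3 statements merged into one kernel-verified Lean document; each statement's English description precedes it below -/
import Mathlib

section
/- If a semigroup S is word hyperbolic with respect to one choice of generators (i.e., there exists a regular combing R over that alphabet whose multiplication table is context-free), then for every choice of generators g : Δ⁺ → S there exists a regular combing R₁ ⊆ Δ⁺ whose multiplication table is context-free. -/
/-- Evaluation of a nonempty word in a semigroup via a map on letters;
the empty word evaluates to `none`. -/
def evalS {α S : Type*} [Semigroup S] (f : α → S) : List α → Option S
  | [] => none
  | a :: as => some (as.foldl (fun s b => s * f b) (f a))

/-- `f : α → S` determines a choice of generators `α⁺ → S`, i.e. the induced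
semigroup homomorphism from the free semigroup on `α` is surjective. -/
def IsChoice {α S : Type*} [Semigroup S] (f : α → S) : Prop :=
  ∀ s : S, ∃ w : List α, evalS f w = some s

/-- The encoding of `u#v#wʳ` as a word over `Option α`, with `none` playing the
role of the fresh symbol `#`. -/
def hashWord {α : Type*} (u v w : List α) : List (Option α) :=
  u.map some ++ none :: v.map some ++ none :: w.reverse.map some

/-- The multiplication table of the language `R` with respect to `f`:
all words `u#v#wʳ` with `u,v,w ∈ R` and `ū·v̄ = w̄`. -/
def mulTable {α S : Type*} [Semigroup S] (f : α → S) (R : Language α) :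
    Language (Option α) :=
  { x | ∃ u v w, u ∈ R ∧ v ∈ R ∧ w ∈ R ∧
      (∃ su sv, evalS f u = some su ∧ evalS f v = some sv ∧
        evalS f w = some (su * sv)) ∧ x = hashWord u v w }

/-- `R` is a combing for `S` with respect to `f`: a set of nonempty words
representing every element of `S`. -/
def IsCombing {α S : Type*} [Semigroup S] (f : α → S) (R : Language α) : Prop :=
  ([] : List α) ∉ R ∧ ∀ s : S, ∃ w ∈ R, evalS f w = some s

/-- A semigroup is word hyperbolic if for some choice of generators there is a
regular combing whose multiplication table is context-free. -/
def WordHyperbolic (S : Type*) [Semigroup S] : Prop :=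
  ∃ (α : Type) (_ : Fintype α) (f : α → S), IsChoice f ∧
    ∃ R : Language α, R.IsRegular ∧ IsCombing f R ∧ (mulTable f R).IsContextFree

section evalHelp
variable {α S : Type*} [Semigroup S] (f : α → S)

lemma foldl_mul_assoc' (l : List α) (s t : S) :
    l.foldl (fun x b => x * f b) (s * t) = s * l.foldl (fun x b => x * f b) t := by
  induction l generalizing t with
  | nil => rfl
  | cons b l ih => simp only [List.foldl_cons, mul_assoc, ih]

lemma evalS_ne_nil {w : List α} (hw : w ≠ []) : ∃ s, evalS f w = some s := by
  cases w with
  | nil => exact absurd rfl hw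
  | cons a as => exact ⟨_, rfl⟩

lemma evalS_append {x y : List α} {sx sy : S}
    (hx : evalS f x = some sx) (hy : evalS f y = some sy) :
    evalS f (x ++ y) = some (sx * sy) := by
  cases x with
  | nil => simp [evalS] at hx
  | cons c cs =>
    cases y with
    | nil => simp [evalS] at hy
    | cons d ds =>
      simp only [evalS, Option.some.injEq] at hx hy
      subst hx hy
      show evalS f (c :: (cs ++ d :: ds)) = _
      show some ((cs ++ d :: ds).foldl (fun s b => s * f b) (f c)) = _
      rw [List.foldl_append, List.foldl_cons, ← foldl_mul_assoc']

lemma evalS_single (a : α) : evalS f [a] = some (f a) := rfl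

end evalHelp

lemma isRegular_flatMap_image {α β : Type} [Fintype α] [Nonempty α]
    {R : Language α} (hR : R.IsRegular) (φ : α → List β) (hφ : ∀ a, φ a ≠ []) :
    Language.IsRegular {y | ∃ w ∈ R, y = w.flatMap φ} := by
  classical
  obtain ⟨σ, _, M, rfl⟩ := hR
  have hsuf : Finite {l : List β // ∃ a, l <:+ φ a} := by
    have hfin : Set.Finite {l : List β | ∃ a, l <:+ φ a} := by
      have he : {l : List β | ∃ a, l <:+ φ a} = ⋃ a, {l | l <:+ φ a} := by ext; simp
      rw [he]
      exact Set.finite_iUnion fun a =>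
        Set.Finite.ofFinset (φ a).tails.toFinset (by simp [List.mem_tails])
    exact hfin
  set Q := σ × α × {l : List β // ∃ a, l <:+ φ a} with hQ
  haveI : Finite Q := by infer_instance
  haveI : Fintype Q := Fintype.ofFinite Q
  set N : NFA β Q :=
    { step := fun s b =>
        { s' | (s'.1 = s.1 ∧ s'.2.1 = s.2.1 ∧ s.2.2.1 = b :: s'.2.2.1 ∧ s'.2.2.1 ≠ [])
             ∨ (s.2.2.1 = [b] ∧ s'.1 = M.step s.1 s.2.1 ∧ s'.2.2.1 = φ s'.2.1) }
      start := { s | s.1 = M.start ∧ s.2.2.1 = φ s.2.1 }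
      accept := { s | s.2.2.1 = φ s.2.1 ∧ s.1 ∈ M.accept } } with hN
  set Inv : List β → Q → Prop := fun x s =>
    ∃ w p, x = w.flatMap φ ++ p ∧ φ s.2.1 = p ++ s.2.2.1 ∧ s.2.2.1 ≠ [] ∧
      s.1 = M.evalFrom M.start w with hInv
  have flatMap_nil : ∀ w : List α, w.flatMap φ = [] → w = [] := by
    intro w hw
    cases w with
    | nil => rfl
    | cons a as =>
      simp only [List.flatMap_cons, List.append_eq_nil_iff] at hw
      exact absurd hw.1 (hφ a)
  have key : ∀ x, N.evalFrom N.start x = {s | Inv x s} := by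
    intro x
    induction x using List.reverseRecOn with
    | nil =>
      ext s
      show s ∈ N.start ↔ Inv [] s
      constructor
      · rintro ⟨h1, h2⟩
        exact ⟨[], [], by simp, by simp [h2], h2 ▸ hφ _, by simp [h1]⟩
      · rintro ⟨w, p, hx, hp, hne, hq⟩
        have h1 : w.flatMap φ = [] := by
          cases hfl : w.flatMap φ with
          | nil => rfl
          | cons c cs => rw [hfl] at hx; simp at hx
        rw [h1] at hx
        have h2 : p = [] := by simpa using hx.symm
        have hwnil := flatMap_nil w h1
        subst hwnil h2
        exact ⟨by simpa using hq, by simpa using hp.symm⟩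
    | append_singleton x b ih =>
      rw [NFA.evalFrom_append, ih, NFA.evalFrom_singleton]
      ext s'
      rw [NFA.mem_stepSet]
      constructor
      · rintro ⟨s, hs, hstep⟩
        obtain ⟨w, p, hx, hp, hne, hq⟩ := hs
        rcases hstep with ⟨e1, e2, e3, e4⟩ | ⟨e1, e2, e3⟩
        · refine ⟨w, p ++ [b], by rw [hx]; simp, ?_, e4, by rw [e1, hq]⟩
          rw [e2, hp, e3]; simp
        · refine ⟨w ++ [s.2.1], [], ?_, by simpa using e3.symm, e3 ▸ hφ _, ?_⟩
          · rw [List.flatMap_append, List.flatMap_cons, List.flatMap_nil, hp, e1, hx]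
            simp
          · rw [e2, hq]
            exact (M.evalFrom_append_singleton _ _ _).symm
      · rintro ⟨w', p', hx, hp, hne, hq⟩
        rcases List.eq_nil_or_concat p' with rfl | ⟨p, c, rfl⟩
        · -- block boundary: x ++ [b] = w'.flatMap φ
          rw [List.append_nil] at hx
          have hw'ne : w' ≠ [] := by
            rintro rfl
            simp at hx
          rcases List.eq_nil_or_concat w' with rfl | ⟨w, a, rfl⟩
          · exact absurd rfl hw'ne
          rw [List.concat_eq_append] at hq hx
          rw [List.flatMap_append, List.flatMap_cons, List.flatMap_nil,
            List.append_nil] at hx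
          rcases List.eq_nil_or_concat (φ a) with hnil | ⟨p, c, hpc⟩
          · exact absurd hnil (hφ a)
          rw [List.concat_eq_append] at hpc
          rw [hpc, ← List.append_assoc] at hx
          obtain ⟨hx1, hb⟩ := List.append_inj' hx rfl
          obtain rfl : b = c := by injection hb
          refine ⟨⟨M.evalFrom M.start w, a, ⟨[b], ⟨a, ⟨p, hpc.symm⟩⟩⟩⟩,
            ⟨w, p, hx1, hpc, by simp, rfl⟩, ?_⟩
          right
          refine ⟨rfl, ?_, by simpa using hp.symm⟩
          rw [hq]
          exact M.evalFrom_append_singleton _ _ _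
        · -- mid block
          rw [List.concat_eq_append] at hp
          rw [List.concat_eq_append, ← List.append_assoc] at hx
          obtain ⟨hx1, hb⟩ := List.append_inj' hx rfl
          obtain rfl : b = c := by injection hb
          have hsufp : (b :: s'.2.2.1) <:+ φ s'.2.1 :=
            ⟨p, by rw [hp]; simp⟩
          refine ⟨⟨s'.1, s'.2.1, ⟨b :: s'.2.2.1, ⟨s'.2.1, hsufp⟩⟩⟩,
            ⟨w', p, hx1, by rw [hp]; simp, by simp, hq⟩, ?_⟩
          left
          exact ⟨rfl, rfl, rfl, hne⟩
  refine ⟨Set Q, inferInstance, N.toDFA, ?_⟩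
  rw [NFA.toDFA_correct]
  ext x
  rw [NFA.mem_accepts]
  constructor
  · rintro ⟨s, ⟨ha1, ha2⟩, hs⟩
    rw [key] at hs
    obtain ⟨w, p, hx, hp, hne, hq⟩ := hs
    rw [ha1] at hp
    have hpnil : p = [] := List.self_eq_append_left.mp hp
    subst hpnil
    rw [List.append_nil] at hx
    refine ⟨w, ?_, hx⟩
    show M.evalFrom M.start w ∈ M.accept
    exact hq ▸ ha2
  · rintro ⟨w, hw, rfl⟩
    obtain ⟨a₀⟩ := ‹Nonempty α›
    refine ⟨⟨M.evalFrom M.start w, a₀, ⟨φ a₀, ⟨a₀, List.suffix_refl _⟩⟩⟩,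
      ⟨rfl, hw⟩, ?_⟩
    rw [key]
    exact ⟨w, [], by simp, by simp, hφ a₀, rfl⟩

namespace GsmCF

variable {T T' Q N : Type}

/-- Run a deterministic transducer, producing output. -/
def transduce (δ : Q → T → Q) (o : Q → T → List T') : Q → List T → List T'
  | _, [] => []
  | q, t :: ts => o q t ++ transduce δ o (δ q t) ts

/-- Run a deterministic transducer, producing the final state. -/
def run (δ : Q → T → Q) : Q → List T → Q
  | q, [] => q
  | q, t :: ts => run δ (δ q t) ts

lemma transduce_append (δ : Q → T → Q) (o : Q → T → List T') (q : Q) (x y : List T) :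
    transduce δ o q (x ++ y) = transduce δ o q x ++ transduce δ o (run δ q x) y := by
  induction x generalizing q with
  | nil => rfl
  | cons t ts ih => simp [transduce, run, ih, List.append_assoc]

/-- `Lifts δ o p s q z` : `z` is an annotated version of the sentential form `s`,
consuming transducer states from `p` to `q`. -/
inductive Lifts (δ : Q → T → Q) (o : Q → T → List T') :
    Q → List (Symbol T N) → Q → List (Symbol T' (Option (Q × N × Q))) → Prop
  | nil (p : Q) : Lifts δ o p [] p []
  | term {p q : Q} {w z} (t : T) (h : Lifts δ o (δ p t) w q z) :
      Lifts δ o p (Symbol.terminal t :: w) q ((o p t).map Symbol.terminal ++ z)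
  | nonterm {p q : Q} {w z} (A : N) (p' : Q) (h : Lifts δ o p' w q z) :
      Lifts δ o p (Symbol.nonterminal A :: w) q
        (Symbol.nonterminal (some (p, A, p')) :: z)

variable {δ : Q → T → Q} {o : Q → T → List T'}

lemma Lifts.append {p m q : Q} {s₁ s₂ : List (Symbol T N)} {z₁ z₂}
    (h₁ : Lifts δ o p s₁ m z₁) (h₂ : Lifts δ o m s₂ q z₂) :
    Lifts δ o p (s₁ ++ s₂) q (z₁ ++ z₂) := by
  induction h₁ with
  | nil => simpa using h₂
  | term t _ ih => simpa [List.append_assoc] using Lifts.term t (ih h₂)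
  | nonterm A p' _ ih => exact Lifts.nonterm A p' (ih h₂)

lemma Lifts.single_nt (p q : Q) (A : N) :
    Lifts δ o p [Symbol.nonterminal A] q [Symbol.nonterminal (some (p, A, q))] :=
  Lifts.nonterm A q (Lifts.nil q)

lemma Lifts.single_nt_inv {p q : Q} {A : N} {z}
    (h : Lifts δ o p [Symbol.nonterminal A] q z) :
    z = [Symbol.nonterminal (some (p, A, q))] := by
  cases h with
  | nonterm A p' h' => cases h'; rfl

/-- Split a lift along an append of the source string. -/
lemma Lifts.split_src {p q : Q} {s₁ s₂ : List (Symbol T N)} {z}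
    (h : Lifts δ o p (s₁ ++ s₂) q z) :
    ∃ m z₁ z₂, z = z₁ ++ z₂ ∧ Lifts δ o p s₁ m z₁ ∧ Lifts δ o m s₂ q z₂ := by
  induction s₁ generalizing p z with
  | nil => exact ⟨p, [], z, rfl, Lifts.nil p, by simpa using h⟩
  | cons a s₁ ih =>
    rw [List.cons_append] at h
    cases h with
    | term t h' =>
      obtain ⟨m, z₁, z₂, rfl, hl, hr⟩ := ih h'
      exact ⟨m, (o p t).map Symbol.terminal ++ z₁, z₂, by simp [List.append_assoc],
        Lifts.term t hl, hr⟩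
    | nonterm A p' h' =>
      obtain ⟨m, z₁, z₂, rfl, hl, hr⟩ := ih h'
      exact ⟨m, Symbol.nonterminal (some (p, A, p')) :: z₁, z₂, by simp,
        Lifts.nonterm A p' hl, hr⟩

/-- Split a lift at a nonterminal occurrence of the target string. -/
lemma Lifts.split_nt {p q : Q} {s : List (Symbol T N)} {zp zq}
    {X : Option (Q × N × Q)} {z}
    (h : Lifts δ o p s q z) (hz : z = zp ++ Symbol.nonterminal X :: zq) :
    ∃ (p₁ p₂ : Q) (A : N) (sp sq : List (Symbol T N)),
      X = some (p₁, A, p₂) ∧ s = sp ++ Symbol.nonterminal A :: sq ∧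
      Lifts δ o p sp p₁ zp ∧ Lifts δ o p₂ sq q zq := by
  induction h generalizing zp with
  | nil p =>
    exact absurd hz.symm (by simp)
  | @term p q w z t h' ih =>
    -- (o p t).map terminal ++ z = zp ++ nt X :: zq
    have hzp : ∃ zp', zp = (o p t).map Symbol.terminal ++ zp' ∧
        z = zp' ++ Symbol.nonterminal X :: zq := by
      rcases List.append_eq_append_iff.mp hz with ⟨a', ha1, ha2⟩ | ⟨c', hc1, hc2⟩
      · exact ⟨a', ha1, ha2⟩
      · cases c' with
        | nil => exact ⟨[], by simpa using hc1.symm, by simpa using hc2.symm⟩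
        | cons d c'' =>
          exfalso
          have hd : d ∈ (o p t).map Symbol.terminal := by
            rw [hc1]; exact List.mem_append_right _ List.mem_cons_self
          have : d = Symbol.nonterminal X := by
            have := hc2
            simp only [List.cons_append] at this
            exact (List.cons.inj this.symm).1
          rw [this] at hd
          simp at hd
    obtain ⟨zp', rfl, hz'⟩ := hzp
    obtain ⟨p₁, p₂, A, sp, sq, hX, hs, hl, hr⟩ := ih hz'
    exact ⟨p₁, p₂, A, Symbol.terminal t :: sp, sq, hX, by rw [hs]; rfl,
      Lifts.term t hl, hr⟩
  | @nonterm p q w z A p' h' ih =>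
    cases zp with
    | nil =>
      simp only [List.nil_append, List.cons.injEq] at hz
      obtain ⟨hX, hzq⟩ := hz
      refine ⟨p, p', A, [], w, ?_, rfl, Lifts.nil p, hzq ▸ h'⟩
      injection hX.symm
    | cons y zp' =>
      simp only [List.cons_append, List.cons.injEq] at hz
      obtain ⟨rfl, hz'⟩ := hz
      obtain ⟨p₁, p₂, A', sp, sq, hX, hs, hl, hr⟩ := ih hz'
      exact ⟨p₁, p₂, A', Symbol.nonterminal A :: sp, sq, hX, by rw [hs]; rfl,
        Lifts.nonterm A p' hl, hr⟩


lemma Lifts.all_terminal {p q : Q} {s : List (Symbol T N)} {z}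
    (h : Lifts δ o p s q z)
    (hz : ∀ a ∈ z, ∃ t', a = Symbol.terminal t') :
    ∃ x, s = List.map Symbol.terminal x ∧
      z = List.map Symbol.terminal (transduce δ o p x) ∧ q = run δ p x := by
  induction h with
  | nil p => exact ⟨[], rfl, rfl, rfl⟩
  | @term p q w z t h' ih =>
    obtain ⟨x, hs, hzz, hq⟩ := ih fun a ha => hz a (List.mem_append_right _ ha)
    exact ⟨t :: x, by rw [hs]; rfl, by rw [hzz]; simp [transduce], by rw [hq]; rfl⟩
  | @nonterm p q w z A p' h' ih =>
    exfalso
    obtain ⟨t', ht'⟩ := hz _ List.mem_cons_self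
    simp at ht'

lemma Lifts.canonical (δ : Q → T → Q) (o : Q → T → List T') (p : Q) (x : List T) :
    Lifts (N := N) δ o p (List.map Symbol.terminal x) (run δ p x)
      (List.map Symbol.terminal (transduce δ o p x)) := by
  induction x generalizing p with
  | nil => exact Lifts.nil p
  | cons t ts ih =>
    show Lifts δ o p (Symbol.terminal t :: _) _ _
    have := Lifts.term (o := o) t (ih (δ p t))
    simpa [transduce, run] using this

lemma Lifts.no_none_nt {p q : Q} {s : List (Symbol T N)} {z}
    (h : Lifts δ o p s q z) {zp zq}
    (hz : z = zp ++ Symbol.nonterminal none :: zq) : False := by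
  obtain ⟨p₁, p₂, A, sp, sq, hX, -⟩ := h.split_nt hz
  simp at hX

open Classical in
/-- All annotated versions of a rule right-hand side. -/
noncomputable def liftStr [Fintype Q] (δ : Q → T → Q) (o : Q → T → List T') :
    Q → List (Symbol T N) → Finset (Q × List (Symbol T' (Option (Q × N × Q))))
  | p, [] => {(p, [])}
  | p, Symbol.terminal t :: w =>
      (liftStr δ o (δ p t) w).image fun qz =>
        (qz.1, (o p t).map Symbol.terminal ++ qz.2)
  | p, Symbol.nonterminal A :: w =>
      Finset.univ.biUnion fun p' => (liftStr δ o p' w).image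
        fun qz => (qz.1, Symbol.nonterminal (some (p, A, p')) :: qz.2)

lemma mem_liftStr [Fintype Q] {p q : Q} {s : List (Symbol T N)} {z} :
    (q, z) ∈ liftStr δ o p s ↔ Lifts δ o p s q z := by
  induction s generalizing p q z with
  | nil =>
    simp only [liftStr, Finset.mem_singleton, Prod.mk.injEq]
    constructor
    · rintro ⟨rfl, rfl⟩; exact Lifts.nil _
    · rintro h; cases h; exact ⟨rfl, rfl⟩
  | cons a s ih =>
    cases a with
    | terminal t =>
      simp only [liftStr, Finset.mem_image, Prod.mk.injEq, Prod.exists]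
      constructor
      · rintro ⟨q', z', hmem, rfl, rfl⟩
        exact Lifts.term t (ih.mp hmem)
      · rintro h
        cases h with
        | term t h' => exact ⟨_, _, ih.mpr h', rfl, rfl⟩
    | nonterminal A =>
      simp only [liftStr, Finset.mem_biUnion, Finset.mem_image, Finset.mem_univ,
        true_and, Prod.mk.injEq, Prod.exists]
      constructor
      · rintro ⟨p', q', z', hmem, rfl, rfl⟩
        exact Lifts.nonterm A p' (ih.mp hmem)
      · rintro h
        cases h with
        | nonterm A p' h' => exact ⟨p', _, _, ih.mpr h', rfl, rfl⟩

open Classical in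
/-- The grammar for the image of a context-free language under a deterministic
transduction. -/
noncomputable def liftGrammar [Fintype Q] (δ : Q → T → Q) (o : Q → T → List T')
    (q₀ : Q) (g : ContextFreeGrammar.{0} T) : ContextFreeGrammar T' where
  NT := Option (Q × g.NT × Q)
  initial := none
  rules :=
    (Finset.univ.image fun q : Q =>
      ⟨none, [Symbol.nonterminal (some (q₀, g.initial, q))]⟩)
    ∪ g.rules.biUnion fun r => (Finset.univ : Finset Q).biUnion fun p =>
        (liftStr δ o p r.output).image fun qz =>
          ⟨some (p, r.input, qz.1), qz.2⟩

lemma terminal_injective : Function.Injective (Symbol.terminal : T' → Symbol T' N) := by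
  intro a b h
  injection h

lemma liftGrammar_sound [Fintype Q] {δ : Q → T → Q} {o : Q → T → List T'}
    {q₀ : Q} {g : ContextFreeGrammar.{0} T} {y : List T'}
    {z : List (Symbol T' (Option (Q × g.NT × Q)))}
    (hD : (liftGrammar δ o q₀ g).Derives z (List.map Symbol.terminal y)) :
    ∀ p q (s : List (Symbol T g.NT)), Lifts δ o p s q z →
      ∃ x, g.Derives s (List.map Symbol.terminal x) ∧ y = transduce δ o p x := by
  classical
  letI : DecidableEq (liftGrammar δ o q₀ g).NT := fun a b =>
    (inferInstance : DecidableEq (Option (Q × g.NT × Q))) a b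
  induction hD using Relation.ReflTransGen.head_induction_on with
  | refl =>
    intro p q s hl
    obtain ⟨x, hs, hz, -⟩ := hl.all_terminal (fun a ha => by
      obtain ⟨t', -, rfl⟩ := List.mem_map.mp ha
      exact ⟨t', rfl⟩)
    refine ⟨x, hs ▸ ContextFreeGrammar.Derives.refl _, ?_⟩
    exact List.map_injective_iff.mpr terminal_injective hz
  | head hstep hrest ih =>
    intro p q s hl
    obtain ⟨r', hr'mem, hrw⟩ := hstep
    obtain ⟨zp, zq, hz1, hz2⟩ := hrw.exists_parts
    rcases Finset.mem_union.mp hr'mem with hstart | hlift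
    · obtain ⟨q', -, rfl⟩ := Finset.mem_image.mp hstart
      exact (Lifts.no_none_nt hl (zp := zp) (zq := zq) (by rw [hz1]; simp; rfl)).elim
    · obtain ⟨r, hrmem, hrest'⟩ := Finset.mem_biUnion.mp hlift
      obtain ⟨p₁, -, h3⟩ := Finset.mem_biUnion.mp hrest'
      obtain ⟨⟨q₁, out'⟩, hqz, rfl⟩ := Finset.mem_image.mp h3
      obtain ⟨p₁', p₂', A, sp, sq, hX, hs, hlp, hlq⟩ :=
        hl.split_nt (X := some (p₁, r.input, q₁)) (zp := zp) (zq := zq)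
          (by rw [hz1]; simp; rfl)
      simp only [Option.some.injEq, Prod.mk.injEq] at hX
      obtain ⟨rfl, rfl, rfl⟩ := hX
      have hprod : g.Produces s (sp ++ r.output ++ sq) :=
        ⟨r, hrmem, by
          rw [hs, ← List.singleton_append, ← List.append_assoc]
          exact ContextFreeRule.rewrites_of_exists_parts r sp sq⟩
      obtain ⟨x, hd, hy⟩ := ih p q (sp ++ r.output ++ sq) (by
        rw [hz2, List.append_assoc, List.append_assoc]
        exact hlp.append ((mem_liftStr.mp hqz).append hlq))
      exact ⟨x, hprod.trans_derives hd, hy⟩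

lemma liftGrammar_complete [Fintype Q] {δ : Q → T → Q} {o : Q → T → List T'}
    {q₀ : Q} {g : ContextFreeGrammar.{0} T} {s : List (Symbol T g.NT)} {x : List T}
    (hD : g.Derives s (List.map Symbol.terminal x)) :
    ∀ p, ∃ z, Lifts δ o p s (run δ p x) z ∧
      (liftGrammar δ o q₀ g).Derives z
        (List.map Symbol.terminal (transduce δ o p x)) := by
  classical
  letI : DecidableEq (liftGrammar δ o q₀ g).NT := fun a b =>
    (inferInstance : DecidableEq (Option (Q × g.NT × Q))) a b
  induction hD using Relation.ReflTransGen.head_induction_on with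
  | refl =>
    intro p
    exact ⟨_, Lifts.canonical δ o p x, ContextFreeGrammar.Derives.refl _⟩
  | head hstep hrest ih =>
    intro p
    obtain ⟨r, hrmem, hrw⟩ := hstep
    obtain ⟨sp, sq, hs1, hs2⟩ := hrw.exists_parts
    obtain ⟨z₁, hl₁, hd₁⟩ := ih p
    rw [hs2, List.append_assoc] at hl₁
    obtain ⟨m₁, za, zrest, rfl, hla, hlrest⟩ := hl₁.split_src
    obtain ⟨m₂, zb, zc, rfl, hlb, hlc⟩ := hlrest.split_src
    refine ⟨za ++ Symbol.nonterminal (some (m₁, r.input, m₂)) :: zc, ?_, ?_⟩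
    · rw [hs1, List.append_assoc, List.singleton_append]
      have := hla.append ((Lifts.single_nt m₁ m₂ r.input).append hlc)
      simpa using this
    · refine ContextFreeGrammar.Produces.trans_derives
        ⟨⟨some (m₁, r.input, m₂), zb⟩, ?_, ?_⟩ hd₁
      · refine Finset.mem_union_right _ (Finset.mem_biUnion.mpr ⟨r, hrmem, ?_⟩)
        refine Finset.mem_biUnion.mpr ⟨m₁, Finset.mem_univ _, ?_⟩
        exact Finset.mem_image.mpr ⟨(m₂, zb), mem_liftStr.mpr hlb, rfl⟩
      · have := ContextFreeRule.rewrites_of_exists_parts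
          (⟨some (m₁, r.input, m₂), zb⟩ : ContextFreeRule T' (Option (Q × g.NT × Q))) za zc
        simp at this; exact this

lemma liftGrammar_language [Fintype Q] (δ : Q → T → Q) (o : Q → T → List T')
    (q₀ : Q) (g : ContextFreeGrammar.{0} T) :
    (liftGrammar δ o q₀ g).language =
      {y | ∃ x ∈ g.language, y = transduce δ o q₀ x} := by
  classical
  letI : DecidableEq (liftGrammar δ o q₀ g).NT := fun a b =>
    (inferInstance : DecidableEq (Option (Q × g.NT × Q))) a b
  ext y
  constructor
  · intro hy
    have hD : (liftGrammar δ o q₀ g).Derives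
        [Symbol.nonterminal (liftGrammar δ o q₀ g).initial]
        (List.map Symbol.terminal y) := hy
    rcases hD.eq_or_head with heq | ⟨z₁, hp, hd⟩
    · cases y <;> simp at heq
    · obtain ⟨r', hr'mem, hrw⟩ := hp
      obtain ⟨zp, zq, h1, h2⟩ := hrw.exists_parts
      have hlen := congrArg List.length h1
      simp only [List.length_append, List.length_cons, List.length_nil] at hlen
      have hzp : zp = [] := List.eq_nil_of_length_eq_zero (by omega)
      have hzq : zq = [] := List.eq_nil_of_length_eq_zero (by omega)
      subst hzp hzq
      simp only [List.nil_append, List.append_nil] at h1 h2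
      have hinput : r'.input = none := by
        have h1' : Symbol.nonterminal (liftGrammar δ o q₀ g).initial =
            (Symbol.nonterminal r'.input : Symbol T' (liftGrammar δ o q₀ g).NT) := by
          injection h1
        have h1'' : (liftGrammar δ o q₀ g).initial = r'.input := by
          injection h1'
        exact h1''.symm
      rcases Finset.mem_union.mp hr'mem with hstart | hlift
      · obtain ⟨q', -, rfl⟩ := Finset.mem_image.mp hstart
        subst h2
        obtain ⟨x, hderiv, hy'⟩ := liftGrammar_sound hd q₀ q'
          [Symbol.nonterminal g.initial] (Lifts.single_nt q₀ q' g.initial)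
        exact ⟨x, hderiv, hy'⟩
      · exfalso
        obtain ⟨r, -, hrest'⟩ := Finset.mem_biUnion.mp hlift
        obtain ⟨p₁, -, h3⟩ := Finset.mem_biUnion.mp hrest'
        obtain ⟨⟨q₁, out'⟩, -, rfl⟩ := Finset.mem_image.mp h3
        simp at hinput
  · rintro ⟨x, hx, rfl⟩
    obtain ⟨z, hl, hd⟩ := liftGrammar_complete (q₀ := q₀) (δ := δ) (o := o) hx q₀
    rw [hl.single_nt_inv] at hd
    show (liftGrammar δ o q₀ g).Derives _ _
    refine ContextFreeGrammar.Produces.trans_derives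
      ⟨⟨none, [Symbol.nonterminal (some (q₀, g.initial, run δ q₀ x))]⟩, ?_, ?_⟩ hd
    · exact Finset.mem_union_left _
        (Finset.mem_image.mpr ⟨run δ q₀ x, Finset.mem_univ _, rfl⟩)
    · exact (ContextFreeRule.Rewrites.input_output (r :=
        (⟨none, [Symbol.nonterminal (some (q₀, g.initial, run δ q₀ x))]⟩ :
          ContextFreeRule T' (Option (Q × g.NT × Q)))))

theorem isContextFree_transduce {L : Language T} (hL : L.IsContextFree)
    [Fintype Q] (δ : Q → T → Q) (o : Q → T → List T') (q₀ : Q) :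
    Language.IsContextFree {y | ∃ x ∈ L, y = transduce δ o q₀ x} := by
  obtain ⟨g, rfl⟩ := hL
  exact ⟨liftGrammar δ o q₀ g, liftGrammar_language δ o q₀ g⟩

end GsmCF


/-- If `S` is word hyperbolic with respect to one choice of generators, then it is
word hyperbolic with respect to every choice of generators. -/
theorem hyperbolic_all_generators {S : Type*} [Semigroup S]
    {α : Type} [Fintype α] (f : α → S) (hf : IsChoice f)
    (h : ∃ R : Language α, R.IsRegular ∧ IsCombing f R ∧ (mulTable f R).IsContextFree)
    {β : Type} [Fintype β] (g : β → S) (hg : IsChoice g) :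
    ∃ R₁ : Language β, R₁.IsRegular ∧ IsCombing g R₁ ∧ (mulTable g R₁).IsContextFree := by
  classical
  obtain ⟨R, hreg, ⟨hRnil, hRall⟩, hCF⟩ := h
  rcases isEmpty_or_nonempty S with hS | hS
  · -- `S` is empty: the empty language works.
    refine ⟨(fun _ => False : Language β), ?_, ⟨fun hx => hx.elim, fun s => (hS.false s).elim⟩, ?_⟩
    · refine ⟨Unit, inferInstance, ⟨fun _ _ => (), (), ∅⟩, ?_⟩
      ext x
      exact iff_of_false (by simp [DFA.mem_accepts]) (fun hx => hx.elim)
    · have hempty : mulTable g (fun _ => False : Language β) =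
          (fun _ => False : Language (Option β)) := by
        ext x
        exact iff_of_false (by rintro ⟨u, v, w, hu, -⟩; exact hu.elim) (fun hx => hx.elim)
      rw [hempty]
      refine ⟨⟨Unit, (), ∅⟩, ?_⟩
      ext x
      refine iff_of_false ?_ (fun hx => hx.elim)
      intro hd
      rcases ContextFreeGrammar.Derives.eq_or_head hd with heq | ⟨v, ⟨r, hr, -⟩, -⟩
      · cases x <;> simp at heq
      · simp at hr
  · -- `S` is nonempty.
    have hα : Nonempty α := by
      obtain ⟨s⟩ := hS
      obtain ⟨w, hw⟩ := hf s
      cases w with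
      | nil => simp [evalS] at hw
      | cons a _ => exact ⟨a⟩
    choose φ hφ using fun a : α => hg (f a)
    have hφne : ∀ a, φ a ≠ [] := by
      intro a ha
      have := hφ a
      rw [ha] at this
      simp [evalS] at this
    set R₁ : Language β := {y | ∃ w ∈ R, y = w.flatMap φ} with hR₁
    have hflatne : ∀ w : List α, w ≠ [] → w.flatMap φ ≠ [] := by
      intro w hw
      cases w with
      | nil => exact absurd rfl hw
      | cons a as =>
        simp only [List.flatMap_cons, ne_eq, List.append_eq_nil_iff, not_and]
        intro hcon
        exact absurd hcon (hφne a)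
    have heval : ∀ w : List α, evalS g (w.flatMap φ) = evalS f w := by
      intro w
      induction w with
      | nil => rfl
      | cons a as ih =>
        rcases eq_or_ne as [] with rfl | hne
        · simpa [evalS] using hφ a
        · obtain ⟨s, hsv⟩ := evalS_ne_nil f hne
          have h2 : evalS g (as.flatMap φ) = some s := by rw [ih, hsv]
          rw [List.flatMap_cons, evalS_append g (hφ a) h2,
            show (a :: as) = [a] ++ as from rfl,
            evalS_append f (evalS_single f a) hsv]
    refine ⟨R₁, isRegular_flatMap_image hreg φ hφne, ⟨?_, ?_⟩, ?_⟩
    · -- [] ∉ R₁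
      rintro ⟨w, hw, hwe⟩
      rcases eq_or_ne w [] with rfl | hne
      · exact hRnil hw
      · exact hflatne w hne hwe.symm
    · -- combing
      intro s
      obtain ⟨w, hw, hwe⟩ := hRall s
      exact ⟨w.flatMap φ, ⟨w, hw, rfl⟩, by rw [heval, hwe]⟩
    · -- context-free multiplication table
      set δ : Fin 3 → Option α → Fin 3 :=
        fun p t => t.elim (if p = 0 then 1 else 2) (fun _ => p) with hδ
      set o : Fin 3 → Option α → List (Option β) :=
        fun p t => t.elim [(none : Option β)]
          (fun a => if p = 2 then ((φ a).reverse).map some else (φ a).map some) with ho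
      have hδs : ∀ (p : Fin 3) (a : α), δ p (some a) = p := fun _ _ => rfl
      have hos : ∀ (p : Fin 3) (a : α), p ≠ 2 → o p (some a) = (φ a).map some := by
        intro p a hp
        show (if p = 2 then _ else _) = _
        rw [if_neg hp]
      have ho2 : ∀ a : α, o 2 (some a) = ((φ a).reverse).map some := by
        intro a
        show (if (2 : Fin 3) = 2 then ((φ a).reverse).map some else (φ a).map some)
          = ((φ a).reverse).map (some : β → Option β)
        rw [if_pos rfl]
      have T1 : ∀ (u : List α) (p : Fin 3), p ≠ 2 →
          GsmCF.transduce δ o p (u.map some) = (u.flatMap φ).map some ∧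
            GsmCF.run δ p (u.map some) = p := by
        intro u p hp
        induction u with
        | nil => exact ⟨rfl, rfl⟩
        | cons a as ih =>
          obtain ⟨ih1, ih2⟩ := ih
          constructor
          · show o p (some a) ++ GsmCF.transduce δ o (δ p (some a)) (as.map some) = _
            rw [hδs, ih1, hos p a hp, List.flatMap_cons, List.map_append]
          · show GsmCF.run δ (δ p (some a)) (as.map some) = p
            rw [hδs, ih2]
      have T2 : ∀ u : List α,
          GsmCF.transduce δ o 2 (u.map some) =
            (u.flatMap (fun a => (φ a).reverse)).map some := by
        intro u
        induction u with
        | nil => rfl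
        | cons a as ih =>
          show o 2 (some a) ++ GsmCF.transduce δ o (δ 2 (some a)) (as.map some) = _
          rw [hδs, ih, ho2, List.flatMap_cons, List.map_append]
      have T3 : ∀ u v w : List α,
          GsmCF.transduce δ o 0 (hashWord u v w) =
            hashWord (u.flatMap φ) (v.flatMap φ) (w.flatMap φ) := by
        intro u v w
        have key0 : hashWord u v w =
            u.map some ++ ([none] ++ (v.map some ++ ([none] ++ w.reverse.map some))) := by
          simp [hashWord]
        have e1 : GsmCF.transduce δ o 0 [(none : Option α)] = [(none : Option β)] := rfl
        have e2 : GsmCF.run δ 0 [(none : Option α)] = 1 := rfl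
        have e3 : GsmCF.transduce δ o 1 [(none : Option α)] = [(none : Option β)] := rfl
        have e4 : GsmCF.run δ 1 [(none : Option α)] = 2 := rfl
        rw [key0, GsmCF.transduce_append, GsmCF.transduce_append,
          GsmCF.transduce_append, GsmCF.transduce_append]
        rw [(T1 u 0 (by decide)).1, (T1 u 0 (by decide)).2, e1, e2,
          (T1 v 1 (by decide)).1, (T1 v 1 (by decide)).2, e3, e4, T2 w.reverse]
        have hrev : (w.reverse.flatMap fun a => (φ a).reverse) = (w.flatMap φ).reverse := by
          rw [List.reverse_flatMap]
          rfl
        rw [hrev]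
        simp [hashWord]
      have htab : mulTable g R₁ =
          {y | ∃ x ∈ mulTable f R, y = GsmCF.transduce δ o 0 x} := by
        ext y
        constructor
        · rintro ⟨u', v', w', ⟨u, hu, rfl⟩, ⟨v, hv, rfl⟩, ⟨w, hw, rfl⟩,
            ⟨su, sv, e1, e2, e3⟩, rfl⟩
          rw [heval] at e1 e2 e3
          exact ⟨hashWord u v w, ⟨u, v, w, hu, hv, hw, ⟨su, sv, e1, e2, e3⟩, rfl⟩,
            (T3 u v w).symm⟩
        · rintro ⟨x, ⟨u, v, w, hu, hv, hw, ⟨su, sv, e1, e2, e3⟩, rfl⟩, rfl⟩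
          rw [T3]
          exact ⟨u.flatMap φ, v.flatMap φ, w.flatMap φ, ⟨u, hu, rfl⟩, ⟨v, hv, rfl⟩,
            ⟨w, hw, rfl⟩, ⟨su, sv, by rw [heval, e1], by rw [heval, e2],
              by rw [heval, e3]⟩, rfl⟩
      rw [htab]
      exact GsmCF.isContextFree_transduce hCF δ o 0
end

section
/- For any semigroup S, the semigroup S^Z obtained by adjoining a zero element 0 to S (with 0·s = s·0 = 0·0 = 0 for all s ∈ S) is word hyperbolic if and only if S is word hyperbolic. -/
namespace WHyp

/-! ### evalS lemmas -/

theorem foldl_map_hom {α β S M : Type*} [Semigroup S] [Semigroup M] (f : α → S) (g : β → M)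
    (ι : α → β) (φ : S → M) (hφ : ∀ x y, φ (x * y) = φ x * φ y) :
    ∀ (w : List α) (s : S), (∀ a ∈ w, g (ι a) = φ (f a)) →
      (w.map ι).foldl (fun t b => t * g b) (φ s) = φ (w.foldl (fun t b => t * f b) s)
  | [], _, _ => rfl
  | a :: as, s, h => by
      simp only [List.map_cons, List.foldl_cons]
      rw [h a (by simp), ← hφ]
      exact foldl_map_hom f g ι φ hφ as (s * f a) fun b hb => h b (by simp [hb])

theorem evalS_map {α β S M : Type*} [Semigroup S] [Semigroup M] (f : α → S) (g : β → M)
    (ι : α → β) (φ : S → M) (hφ : ∀ x y, φ (x * y) = φ x * φ y) (w : List α)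
    (h : ∀ a ∈ w, g (ι a) = φ (f a)) :
    evalS g (w.map ι) = (evalS f w).map φ := by
  cases w with
  | nil => rfl
  | cons a as =>
    simp only [List.map_cons, evalS, Option.map_some]
    rw [h a (by simp), foldl_map_hom f g ι φ hφ as (f a) fun b hb => h b (by simp [hb])]

theorem evalS_isSome {α S : Type*} [Semigroup S] (f : α → S) {w : List α} (hw : w ≠ []) :
    ∃ s, evalS f w = some s := by
  cases w with
  | nil => exact absurd rfl hw
  | cons a as => exact ⟨_, rfl⟩

theorem foldl_eq_zero {α M : Type*} [MulZeroClass M] (g : α → M) :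
    ∀ (w : List α), w.foldl (fun s b => s * g b) 0 = 0
  | [] => rfl
  | a :: as => by simp only [List.foldl_cons, zero_mul]; exact foldl_eq_zero g as

theorem foldl_eq_zero' {α M : Type*} [MulZeroClass M] (g : α → M) :
    ∀ (w : List α) (s : M), (∃ a ∈ w, g a = 0) → w.foldl (fun s b => s * g b) s = 0
  | [], _, h => by simp at h
  | a :: as, s, h => by
    simp only [List.foldl_cons]
    rcases h with ⟨b, hb, hb0⟩
    rcases List.mem_cons.mp hb with rfl | hb'
    · rw [hb0, mul_zero]; exact foldl_eq_zero g as
    · exact foldl_eq_zero' g as _ ⟨b, hb', hb0⟩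

theorem evalS_eq_zero {α M : Type*} [SemigroupWithZero M] (g : α → M) {w : List α}
    (h : ∃ a ∈ w, g a = 0) : evalS g w = some 0 := by
  cases w with
  | nil => simp at h
  | cons a as =>
    simp only [evalS, Option.some.injEq]
    rcases h with ⟨b, hb, hb0⟩
    rcases List.mem_cons.mp hb with rfl | hb'
    · rw [hb0]; exact foldl_eq_zero g as
    · exact foldl_eq_zero' g as _ ⟨b, hb', hb0⟩

/-! ### DFA lemmas -/

theorem evalFrom_cons {α σ : Type*} (M : DFA α σ) (s : σ) (a : α) (x : List α) :
    M.evalFrom s (a :: x) = M.evalFrom (M.step s a) x := rfl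

theorem isRegular_union {α : Type*} {L M : Language α} (hL : L.IsRegular) (hM : M.IsRegular) :
    Language.IsRegular {x | x ∈ L ∨ x ∈ M} := by
  obtain ⟨σ, _, P, rfl⟩ := hL
  obtain ⟨τ, _, Q, rfl⟩ := hM
  classical
  refine ⟨σ × τ, inferInstance,
    ⟨fun p a => (P.step p.1 a, Q.step p.2 a), (P.start, Q.start),
      {p | p.1 ∈ P.accept ∨ p.2 ∈ Q.accept}⟩, ?_⟩
  have key : ∀ (x : List α) (p : σ × τ),
      DFA.evalFrom ⟨fun p a => (P.step p.1 a, Q.step p.2 a), (P.start, Q.start),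
        {p | p.1 ∈ P.accept ∨ p.2 ∈ Q.accept}⟩ p x = (P.evalFrom p.1 x, Q.evalFrom p.2 x) := by
    intro x
    induction x with
    | nil => intro p; rfl
    | cons a x ih =>
      intro p
      rw [evalFrom_cons, evalFrom_cons, evalFrom_cons, ih]
  ext x
  simp only [DFA.mem_accepts, DFA.eval, key]
  rfl

theorem isRegular_inter {α : Type*} {L M : Language α} (hL : L.IsRegular) (hM : M.IsRegular) :
    Language.IsRegular {x | x ∈ L ∧ x ∈ M} := by
  obtain ⟨σ, _, P, rfl⟩ := hL
  obtain ⟨τ, _, Q, rfl⟩ := hM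
  classical
  refine ⟨σ × τ, inferInstance,
    ⟨fun p a => (P.step p.1 a, Q.step p.2 a), (P.start, Q.start),
      {p | p.1 ∈ P.accept ∧ p.2 ∈ Q.accept}⟩, ?_⟩
  have key : ∀ (x : List α) (p : σ × τ),
      DFA.evalFrom ⟨fun p a => (P.step p.1 a, Q.step p.2 a), (P.start, Q.start),
        {p | p.1 ∈ P.accept ∧ p.2 ∈ Q.accept}⟩ p x = (P.evalFrom p.1 x, Q.evalFrom p.2 x) := by
    intro x
    induction x with
    | nil => intro p; rfl
    | cons a x ih =>
      intro p
      rw [evalFrom_cons, evalFrom_cons, evalFrom_cons, ih]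
  ext x
  simp only [DFA.mem_accepts, DFA.eval, key]
  rfl

section image
variable {α β : Type*}

open Classical in
/-- DFA for the image of a regular language under an injective letter map. -/
noncomputable def imgDFA {σ : Type*} (M : DFA α σ) (ι : α → β) : DFA β (Option σ) where
  step := fun s b => match s with
    | none => none
    | some q => if h : ∃ a, ι a = b then some (M.step q h.choose) else none
  start := some M.start
  accept := {s | ∃ q ∈ M.accept, s = some q}

theorem imgDFA_evalFrom_none {σ : Type*} (M : DFA α σ) (ι : α → β) :
    ∀ (x : List β), (imgDFA M ι).evalFrom none x = none
  | [] => rfl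
  | b :: x => imgDFA_evalFrom_none M ι x

theorem imgDFA_evalFrom_map {σ : Type*} (M : DFA α σ) {ι : α → β} (hι : Function.Injective ι) :
    ∀ (w : List α) (q : σ), (imgDFA M ι).evalFrom (some q) (w.map ι) = some (M.evalFrom q w)
  | [], q => rfl
  | a :: w, q => by
    have h : ∃ a', ι a' = ι a := ⟨a, rfl⟩
    have hc : h.choose = a := hι h.choose_spec
    rw [List.map_cons, evalFrom_cons, show (imgDFA M ι).step (some q) (ι a) = some (M.step q a) by
      simp only [imgDFA, dif_pos h, hc]]
    exact imgDFA_evalFrom_map M hι w (M.step q a)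

theorem imgDFA_evalFrom_surj {σ : Type*} (M : DFA α σ) (ι : α → β) :
    ∀ (x : List β) (q q' : σ), (imgDFA M ι).evalFrom (some q) x = some q' →
      ∃ w : List α, x = w.map ι ∧ M.evalFrom q w = q'
  | [], q, q', h => ⟨[], rfl, by simpa [DFA.evalFrom] using h⟩
  | b :: x, q, q', h => by
    rw [evalFrom_cons] at h
    by_cases hb : ∃ a, ι a = b
    · rw [show (imgDFA M ι).step (some q) b = some (M.step q hb.choose) by
        simp only [imgDFA, dif_pos hb]] at h
      obtain ⟨w, rfl, hw⟩ := imgDFA_evalFrom_surj M ι x _ q' h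
      exact ⟨hb.choose :: w, by rw [List.map_cons, hb.choose_spec], hw⟩
    · rw [show (imgDFA M ι).step (some q) b = none by simp only [imgDFA, dif_neg hb]] at h
      rw [imgDFA_evalFrom_none] at h
      exact absurd h (by simp)

theorem isRegular_image {L : Language α} (hL : L.IsRegular) {ι : α → β}
    (hι : Function.Injective ι) : Language.IsRegular {x : List β | ∃ w ∈ L, x = w.map ι} := by
  obtain ⟨σ, _, M, rfl⟩ := hL
  refine ⟨Option σ, inferInstance, imgDFA M ι, ?_⟩
  ext x
  simp only [DFA.mem_accepts, DFA.eval]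
  constructor
  · rintro ⟨q, hq, hx⟩
    obtain ⟨w, rfl, hw⟩ := imgDFA_evalFrom_surj M ι x _ q hx
    exact ⟨w, by rw [hw]; exact hq, rfl⟩
  · rintro ⟨w, hw, rfl⟩
    exact ⟨M.eval w, hw, imgDFA_evalFrom_map M hι w M.start⟩

end image

section singleton
variable {β : Type*}

open Classical in
noncomputable def singDFA (c : β) : DFA β (Fin 3) :=
  ⟨fun s b => if s = 0 ∧ b = c then 1 else 2, 0, {1}⟩

theorem singDFA_sink (c : β) : ∀ (x : List β), (singDFA c).evalFrom 2 x = 2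
  | [] => rfl
  | b :: x => by
    rw [evalFrom_cons, show (singDFA c).step 2 b = 2 by simp [singDFA]]
    exact singDFA_sink c x

theorem isRegular_singleton (c : β) : Language.IsRegular {x : List β | x = [c]} := by
  classical
  refine ⟨Fin 3, inferInstance, singDFA c, ?_⟩
  ext x
  show (singDFA c).evalFrom 0 x ∈ ({1} : Set (Fin 3)) ↔ x = [c]
  constructor
  · intro hx
    match x with
    | [] => simp [singDFA, DFA.evalFrom] at hx
    | [b] =>
      by_cases hb : b = c
      · rw [hb]
      · rw [evalFrom_cons, show (singDFA c).step 0 b = 2 by simp [singDFA, hb],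
          singDFA_sink] at hx
        simp at hx
    | b :: b' :: x =>
      exfalso
      rw [evalFrom_cons, evalFrom_cons] at hx
      have hb1 : (singDFA c).step 0 b = 1 ∨ (singDFA c).step 0 b = 2 := by
        simp only [singDFA]
        split
        · exact Or.inl rfl
        · exact Or.inr rfl
      rcases hb1 with h | h <;> rw [h] at hx
      · rw [show (singDFA c).step 1 b' = 2 by simp [singDFA], singDFA_sink] at hx
        simp at hx
      · rw [show (singDFA c).step 2 b' = 2 by simp [singDFA], singDFA_sink] at hx
        simp at hx
  · rintro rfl
    rw [evalFrom_cons, show (singDFA c).step 0 c = 1 by simp [singDFA]]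
    simp [singDFA, DFA.evalFrom]

end singleton

open Classical in
theorem isRegular_avoid {β : Type*} (B : Set β) :
    Language.IsRegular ({x : List β | ∀ b ∈ x, b ∉ B} : Language β) := by
  refine ⟨Bool, inferInstance, ⟨fun s b => if b ∈ B then false else s, true, {true}⟩, ?_⟩
  have key : ∀ (x : List β) (s : Bool),
      DFA.evalFrom ⟨fun s b => if b ∈ B then false else s, true, {true}⟩ s x
        = (s && decide (∀ b ∈ x, b ∉ B)) := by
    intro x
    induction x with
    | nil => intro s; simp [DFA.evalFrom]
    | cons b x ih =>
      intro s
      rw [evalFrom_cons]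
      show DFA.evalFrom _ (if b ∈ B then false else s) x = _
      rw [ih]
      by_cases hb : b ∈ B <;> simp [hb]
  ext x
  show DFA.evalFrom _ _ _ ∈ ({true} : Set Bool) ↔ _
  rw [key]
  show (true && decide (∀ b ∈ x, b ∉ B)) ∈ ({true} : Set Bool) ↔ _
  simp only [Bool.true_and, Set.mem_singleton_iff, decide_eq_true_eq]
  exact Iff.rfl

theorem isRegular_false {β : Type*} : Language.IsRegular {x : List β | False} :=
  ⟨Unit, inferInstance, ⟨fun _ _ => (), (), ∅⟩, by
    ext x
    constructor
    · intro h; exact absurd h (Set.notMem_empty _)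
    · intro h; exact h.elim⟩

end WHyp

namespace WHyp

open ContextFreeGrammar

/-! ### Symbol maps -/

def mapSym {T T' N N' : Type*} (φ : T → T') (ρ : N → N') : Symbol T N → Symbol T' N'
  | .terminal t => .terminal (φ t)
  | .nonterminal n => .nonterminal (ρ n)

def mapRule {T T' N N' : Type*} (φ : T → T') (ρ : N → N') (r : ContextFreeRule T N) :
    ContextFreeRule T' N' :=
  ⟨ρ r.input, r.output.map (mapSym φ ρ)⟩

@[simp] theorem mapSym_terminal {T T' N N' : Type*} (φ : T → T') (ρ : N → N') (t : T) :
    mapSym φ ρ (Symbol.terminal t : Symbol T N) = (Symbol.terminal (φ t) : Symbol T' N') := rfl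

@[simp] theorem mapSym_nonterminal {T T' N N' : Type*} (φ : T → T') (ρ : N → N') (n : N) :
    mapSym φ ρ (Symbol.nonterminal n : Symbol T N)
      = (Symbol.nonterminal (ρ n) : Symbol T' N') := rfl

theorem mapSym_eq_nonterminal {T T' N N' : Type*} {φ : T → T'} {ρ : N → N'}
    {s : Symbol T N} {n' : N'} (h : mapSym φ ρ s = Symbol.nonterminal n') :
    ∃ n, s = Symbol.nonterminal n ∧ ρ n = n' := by
  cases s with
  | terminal t => exact absurd h (by simp [mapSym])
  | nonterminal n => exact ⟨n, rfl, by injection h⟩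

theorem map_mapSym_terminal {T T' N N' : Type*} (φ : T → T') (ρ : N → N') (w : List T) :
    (w.map Symbol.terminal).map (mapSym φ ρ) =
      ((w.map φ).map Symbol.terminal : List (Symbol T' N')) := by
  induction w with
  | nil => rfl
  | cons a w ih => simp [ih]

theorem mapSym_all_terminal {T T' N N' : Type*} {φ : T → T'} {ρ : N → N'}
    {l : List (Symbol T N)} {w : List T'}
    (h : l.map (mapSym φ ρ) = (w.map Symbol.terminal : List (Symbol T' N'))) :
    ∃ w₀ : List T, l = w₀.map Symbol.terminal ∧ w₀.map φ = w := by
  induction l generalizing w with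
  | nil =>
    cases w with
    | nil => exact ⟨[], rfl, rfl⟩
    | cons b w => simp at h
  | cons s l ih =>
    cases w with
    | nil => simp at h
    | cons b w =>
      simp only [List.map_cons, List.cons.injEq] at h
      obtain ⟨h1, h2⟩ := h
      obtain ⟨w₀, rfl, rfl⟩ := ih h2
      cases s with
      | terminal t =>
        refine ⟨t :: w₀, by simp, ?_⟩
        simp only [List.map_cons, List.cons.injEq]
        exact ⟨by injection h1, trivial⟩
      | nonterminal n => exact absurd h1 (by simp [mapSym])

theorem map_eq_append_cons {γ δ : Type*} {f : γ → δ} {l : List γ} {p q : List δ} {x : δ}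
    (h : l.map f = p ++ x :: q) :
    ∃ p₀ m q₀, l = p₀ ++ m :: q₀ ∧ p₀.map f = p ∧ f m = x ∧ q₀.map f = q := by
  rw [show p ++ x :: q = p ++ (x :: q) from rfl, List.map_eq_append_iff] at h
  obtain ⟨l₁, l₂, rfl, h₁, h₂⟩ := h
  rw [List.map_eq_cons_iff] at h₂
  obtain ⟨m, l₃, rfl, hm, hl₃⟩ := h₂
  exact ⟨l₁, m, l₃, rfl, h₁, hm, hl₃⟩

/-! ### Simulation lemmas -/

theorem derives_map {T T' : Type*} {g : ContextFreeGrammar T} {G : ContextFreeGrammar T'}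
    (φ : T → T') (ρ : g.NT → G.NT)
    (hfwd : ∀ r ∈ g.rules, mapRule φ ρ r ∈ G.rules)
    {u v : List (Symbol T g.NT)} (huv : g.Derives u v) :
    G.Derives (u.map (mapSym φ ρ)) (v.map (mapSym φ ρ)) := by
  induction huv with
  | refl => rfl
  | tail _ last ih =>
    refine ih.trans_produces ?_
    obtain ⟨r, hr, hrw⟩ := last
    obtain ⟨p, q, rfl, rfl⟩ := hrw.exists_parts
    refine ⟨mapRule φ ρ r, hfwd r hr, ?_⟩
    have := ContextFreeRule.rewrites_of_exists_parts (mapRule φ ρ r)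
      (p.map (mapSym φ ρ)) (q.map (mapSym φ ρ))
    simpa [mapRule] using this

theorem derives_map_rev {T T' : Type*} {g : ContextFreeGrammar T} {G : ContextFreeGrammar T'}
    (φ : T → T') (ρ : g.NT → G.NT) (hρ : Function.Injective ρ)
    (hback : ∀ r' ∈ G.rules, r'.input ∈ Set.range ρ → ∃ r ∈ g.rules, r' = mapRule φ ρ r)
    {u : List (Symbol T g.NT)} {v' : List (Symbol T' G.NT)}
    (huv : G.Derives (u.map (mapSym φ ρ)) v') :
    ∃ v, v' = v.map (mapSym φ ρ) ∧ g.Derives u v := by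
  induction huv with
  | refl => exact ⟨u, rfl, .refl u⟩
  | tail _ last ih =>
    obtain ⟨v, rfl, hderiv⟩ := ih
    obtain ⟨r', hr', hrw⟩ := last
    obtain ⟨p, q, hsplit, rfl⟩ := hrw.exists_parts
    rw [show p ++ [Symbol.nonterminal r'.input] ++ q
      = p ++ Symbol.nonterminal r'.input :: q by simp] at hsplit
    obtain ⟨p₀, m, q₀, rfl, rfl, hm, rfl⟩ := map_eq_append_cons hsplit
    obtain ⟨n, rfl, hn⟩ := mapSym_eq_nonterminal hm
    obtain ⟨r, hr, rfl⟩ := hback r' hr' ⟨n, hn⟩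
    have hninput : n = r.input := hρ (by simpa [mapRule] using hn)
    subst hninput
    refine ⟨p₀ ++ r.output ++ q₀, by simp [mapRule], hderiv.trans_produces ?_⟩
    exact ⟨r, hr, by
      have := ContextFreeRule.rewrites_of_exists_parts r p₀ q₀
      simpa using this⟩

/-! ### Relabeling terminals -/

open Classical in
@[reducible] noncomputable def relabelGrammar {T T' : Type*} (φ : T → T') (g : ContextFreeGrammar T) :
    ContextFreeGrammar T' :=
  ⟨g.NT, g.initial, g.rules.image (mapRule φ id)⟩

theorem relabelGrammar_language {T T' : Type*} (φ : T → T') (g : ContextFreeGrammar T) :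
    (relabelGrammar φ g).language = {x | ∃ w ∈ g.language, x = w.map φ} := by
  classical
  ext x
  constructor
  · intro hx
    have hx' : (relabelGrammar φ g).Derives
        ([Symbol.nonterminal g.initial].map (mapSym φ id)) (x.map Symbol.terminal) := by
      simpa [mapSym] using hx
    obtain ⟨v, hv, hderiv⟩ := derives_map_rev (g := g) (G := relabelGrammar φ g) φ id
      (fun a b h => h)
      (by
        intro r' hr' _
        simp only [relabelGrammar, Finset.mem_image] at hr'
        obtain ⟨r, hr, rfl⟩ := hr'
        exact ⟨r, hr, rfl⟩) hx'
    obtain ⟨w₀, rfl, hw₀⟩ := mapSym_all_terminal hv.symm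
    exact ⟨w₀, hderiv, hw₀.symm⟩
  · rintro ⟨w, hw, rfl⟩
    have := derives_map (g := g) (G := relabelGrammar φ g) φ id
      (by
        intro r hr
        simp only [relabelGrammar, Finset.mem_image]
        exact ⟨r, hr, rfl⟩) hw
    simp only [mem_language_iff]
    have h2 : ([Symbol.nonterminal g.initial].map (mapSym φ id))
        = [Symbol.nonterminal (relabelGrammar φ g).initial] := by simp [relabelGrammar]
    rw [h2, map_mapSym_terminal] at this
    exact this

theorem cf_relabel {T T' : Type*} {L : Language T} (hL : L.IsContextFree) (φ : T → T') :
    Language.IsContextFree {x : List T' | ∃ w ∈ L, x = w.map φ} := by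
  obtain ⟨g, rfl⟩ := hL
  exact ⟨relabelGrammar φ g, relabelGrammar_language φ g⟩

end WHyp

namespace WHyp
open ContextFreeGrammar

/-! ### Union grammar -/

theorem singleton_eq_append {γ : Type*} {x y : γ} {p q : List γ} (h : [x] = p ++ y :: q) :
    p = [] ∧ x = y ∧ q = [] := by
  cases p with
  | nil =>
    simp only [List.nil_append, List.cons.injEq] at h
    exact ⟨rfl, h.1, h.2.symm ▸ rfl⟩
  | cons z p =>
    simp only [List.cons_append, List.cons.injEq] at h
    exact absurd h.2.symm (by simp)

theorem map_terminal_ne_single_nonterminal {T N : Type*} (w : List T) (n : N) :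
    (w.map Symbol.terminal : List (Symbol T N)) ≠ [Symbol.nonterminal n] := by
  cases w with
  | nil => simp
  | cons a w => simp

open Classical in
@[reducible] noncomputable def unionGrammar {T : Type*} (g₁ g₂ : ContextFreeGrammar T) :
    ContextFreeGrammar T where
  NT := Option (g₁.NT ⊕ g₂.NT)
  initial := none
  rules :=
    insert ⟨none, [Symbol.nonterminal (some (Sum.inl g₁.initial))]⟩
      (insert ⟨none, [Symbol.nonterminal (some (Sum.inr g₂.initial))]⟩
        (g₁.rules.image (mapRule id (fun n => some (Sum.inl n))) ∪
          g₂.rules.image (mapRule id (fun n => some (Sum.inr n)))))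

theorem unionGrammar_language {T : Type*} (g₁ g₂ : ContextFreeGrammar T) :
    (unionGrammar g₁ g₂).language = {x | x ∈ g₁.language ∨ x ∈ g₂.language} := by
  classical
  have hinj₁ : Function.Injective (fun n : g₁.NT => (some (Sum.inl n) : Option (g₁.NT ⊕ g₂.NT))) :=
    fun a b h => by simpa using h
  have hinj₂ : Function.Injective (fun n : g₂.NT => (some (Sum.inr n) : Option (g₁.NT ⊕ g₂.NT))) :=
    fun a b h => by simpa using h
  have hmem : ∀ r' ∈ (unionGrammar g₁ g₂).rules,
      r' = ⟨none, [Symbol.nonterminal (some (Sum.inl g₁.initial))]⟩ ∨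
      r' = ⟨none, [Symbol.nonterminal (some (Sum.inr g₂.initial))]⟩ ∨
      (∃ r ∈ g₁.rules, r' = mapRule id (fun n => some (Sum.inl n)) r) ∨
      (∃ r ∈ g₂.rules, r' = mapRule id (fun n => some (Sum.inr n)) r) := by
    intro r' hr'
    simp only [unionGrammar, Finset.mem_insert, Finset.mem_union, Finset.mem_image] at hr'
    rcases hr' with h | h | ⟨r, hr, rfl⟩ | ⟨r, hr, rfl⟩
    · exact Or.inl h
    · exact Or.inr (Or.inl h)
    · exact Or.inr (Or.inr (Or.inl ⟨r, hr, rfl⟩))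
    · exact Or.inr (Or.inr (Or.inr ⟨r, hr, rfl⟩))
  ext x
  simp only [Set.mem_setOf_eq, mem_language_iff]
  constructor
  · intro hx
    rcases hx.eq_or_head with heq | ⟨v, hprod, hderiv⟩
    · exact absurd heq.symm (map_terminal_ne_single_nonterminal x _)
    · obtain ⟨r', hr', hrw⟩ := hprod
      obtain ⟨p, q, hsplit, rfl⟩ := hrw.exists_parts
      rw [show p ++ [Symbol.nonterminal r'.input] ++ q
        = p ++ Symbol.nonterminal r'.input :: q by simp] at hsplit
      obtain ⟨hp, hin, hq⟩ := singleton_eq_append hsplit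
      subst hp; subst hq
      have hinput : r'.input = none := by injection hin.symm
      rcases hmem r' hr' with rfl | rfl | ⟨r, hr, rfl⟩ | ⟨r, hr, rfl⟩
      · left
        have hd : (unionGrammar g₁ g₂).Derives
            ([Symbol.nonterminal g₁.initial].map
              (mapSym id (fun n => some (Sum.inl n)))) (x.map Symbol.terminal) := by
          simpa using hderiv
        obtain ⟨v, hv, hderiv'⟩ := derives_map_rev (g := g₁) (G := unionGrammar g₁ g₂)
          id (fun n => some (Sum.inl n)) hinj₁
          (by
            intro r' hr' hrange
            rcases hmem r' hr' with rfl | rfl | ⟨r, hr, rfl⟩ | ⟨r, hr, rfl⟩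
            · exact absurd hrange (by rintro ⟨n, h⟩; simp at h)
            · exact absurd hrange (by rintro ⟨n, h⟩; simp at h)
            · exact ⟨r, hr, rfl⟩
            · exact absurd hrange
                (by rintro ⟨n, h⟩; injection h with h2; exact Sum.inl_ne_inr h2)) hd
        obtain ⟨w₀, rfl, hw₀⟩ := mapSym_all_terminal hv.symm
        have hwx : w₀ = x := by simpa using hw₀
        exact hwx ▸ hderiv'
      · right
        have hd : (unionGrammar g₁ g₂).Derives
            ([Symbol.nonterminal g₂.initial].map
              (mapSym id (fun n => some (Sum.inr n)))) (x.map Symbol.terminal) := by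
          simpa using hderiv
        obtain ⟨v, hv, hderiv'⟩ := derives_map_rev (g := g₂) (G := unionGrammar g₁ g₂)
          id (fun n => some (Sum.inr n)) hinj₂
          (by
            intro r' hr' hrange
            rcases hmem r' hr' with rfl | rfl | ⟨r, hr, rfl⟩ | ⟨r, hr, rfl⟩
            · exact absurd hrange (by rintro ⟨n, h⟩; simp at h)
            · exact absurd hrange (by rintro ⟨n, h⟩; simp at h)
            · exact absurd hrange
                (by rintro ⟨n, h⟩; injection h with h2; exact Sum.inr_ne_inl h2)
            · exact ⟨r, hr, rfl⟩) hd
        obtain ⟨w₀, rfl, hw₀⟩ := mapSym_all_terminal hv.symm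
        have hwx : w₀ = x := by simpa using hw₀
        exact hwx ▸ hderiv'
      · exact absurd hinput (by simp [mapRule])
      · exact absurd hinput (by simp [mapRule])
  · intro hx
    rcases hx with hx | hx
    · have hstep : (unionGrammar g₁ g₂).Produces
          [Symbol.nonterminal (unionGrammar g₁ g₂).initial]
          [Symbol.nonterminal (some (Sum.inl g₁.initial))] := by
        refine ⟨⟨none, [Symbol.nonterminal (some (Sum.inl g₁.initial))]⟩, ?_, ?_⟩
        · simp [unionGrammar]
        · exact ContextFreeRule.Rewrites.input_output
      refine hstep.trans_derives ?_
      have := derives_map (g := g₁) (G := unionGrammar g₁ g₂) id (fun n => some (Sum.inl n))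
        (by
          intro r hr
          simp only [unionGrammar, Finset.mem_insert, Finset.mem_union, Finset.mem_image]
          exact Or.inr (Or.inr (Or.inl ⟨r, hr, rfl⟩))) hx
      rw [map_mapSym_terminal] at this
      simpa using this
    · have hstep : (unionGrammar g₁ g₂).Produces
          [Symbol.nonterminal (unionGrammar g₁ g₂).initial]
          [Symbol.nonterminal (some (Sum.inr g₂.initial))] := by
        refine ⟨⟨none, [Symbol.nonterminal (some (Sum.inr g₂.initial))]⟩, ?_, ?_⟩
        · simp [unionGrammar]
        · exact ContextFreeRule.Rewrites.input_output
      refine hstep.trans_derives ?_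
      have := derives_map (g := g₂) (G := unionGrammar g₁ g₂) id (fun n => some (Sum.inr n))
        (by
          intro r hr
          simp only [unionGrammar, Finset.mem_insert, Finset.mem_union, Finset.mem_image]
          exact Or.inr (Or.inr (Or.inr ⟨r, hr, rfl⟩))) hx
      rw [map_mapSym_terminal] at this
      simpa using this

theorem cf_union {T : Type*} {L₁ L₂ : Language T} (h₁ : L₁.IsContextFree)
    (h₂ : L₂.IsContextFree) : Language.IsContextFree {x | x ∈ L₁ ∨ x ∈ L₂} := by
  obtain ⟨g₁, rfl⟩ := h₁
  obtain ⟨g₂, rfl⟩ := h₂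
  exact ⟨unionGrammar g₁ g₂, unionGrammar_language g₁ g₂⟩

end WHyp

namespace WHyp
open ContextFreeGrammar

/-! ### Filtering rules with bad terminals -/

open Classical in
@[reducible] noncomputable def filterGrammar {T : Type*} (g : ContextFreeGrammar T) (B : Set T) :
    ContextFreeGrammar T :=
  ⟨g.NT, g.initial, g.rules.filter
    (fun r => ∀ s ∈ r.output, ∀ t, s = Symbol.terminal t → t ∉ B)⟩

theorem filterGrammar_derives {T : Type*} {g : ContextFreeGrammar T} {B : Set T}
    {u v : List (Symbol T g.NT)} (h : (filterGrammar g B).Derives u v) : g.Derives u v := by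
  classical
  induction h with
  | refl => rfl
  | tail _ last ih =>
    obtain ⟨r, hr, hrw⟩ := last
    exact ih.trans_produces ⟨r, (Finset.mem_filter.mp hr).1, hrw⟩

/-- Terminals persist under derivation. -/
theorem terminal_persists {T : Type*} {g : ContextFreeGrammar T}
    {u v : List (Symbol T g.NT)} (h : g.Derives u v) {t : T}
    (ht : Symbol.terminal t ∈ u) : Symbol.terminal t ∈ v := by
  induction h with
  | refl => exact ht
  | tail _ last ih =>
    obtain ⟨r, _, hrw⟩ := last
    obtain ⟨p, q, rfl, rfl⟩ := hrw.exists_parts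
    simp only [List.mem_append] at ih ⊢
    rcases ih with (hp | hm) | hq
    · exact Or.inl (Or.inl hp)
    · exact absurd (List.mem_singleton.mp hm) (by simp)
    · exact Or.inr hq
  
theorem filterGrammar_derives_rev {T : Type*} {g : ContextFreeGrammar T} {B : Set T}
    {u z : List (Symbol T g.NT)} (h : g.Derives u z)
    (hz : ∀ t : T, Symbol.terminal t ∈ z → t ∉ B) : (filterGrammar g B).Derives u z := by
  classical
  induction h using Relation.ReflTransGen.head_induction_on with
  | refl => rfl
  | head hstep htail ih =>
    rename_i a c
    obtain ⟨r, hr, hrw⟩ := hstep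
    refine Produces.trans_derives ⟨r, ?_, hrw⟩ ih
    simp only [filterGrammar, Finset.mem_filter]
    refine ⟨hr, ?_⟩
    rintro s hs t rfl
    obtain ⟨p, q, rfl, rfl⟩ := hrw.exists_parts
    refine hz t (terminal_persists htail ?_)
    simp only [List.mem_append]
    exact Or.inl (Or.inr hs)

theorem filterGrammar_avoid {T : Type*} {g : ContextFreeGrammar T} {B : Set T}
    {u v : List (Symbol T g.NT)} (h : (filterGrammar g B).Derives u v)
    (hu : ∀ t : T, Symbol.terminal t ∈ u → t ∉ B) :
    ∀ t : T, Symbol.terminal t ∈ v → t ∉ B := by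
  classical
  induction h with
  | refl => exact hu
  | tail _ last ih =>
    obtain ⟨r, hr, hrw⟩ := last
    obtain ⟨p, q, rfl, rfl⟩ := hrw.exists_parts
    intro t ht
    simp only [List.mem_append] at ht
    rcases ht with (hp | hm) | hq
    · exact ih t (by simp only [List.mem_append]; exact Or.inl (Or.inl hp))
    · exact (Finset.mem_filter.mp hr).2 _ hm t rfl
    · exact ih t (by simp only [List.mem_append]; exact Or.inr hq)

theorem cf_filter {T : Type*} {L : Language T} (hL : L.IsContextFree) (B : Set T) :
    Language.IsContextFree {x | x ∈ L ∧ ∀ t ∈ x, t ∉ B} := by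
  classical
  obtain ⟨g, rfl⟩ := hL
  refine ⟨filterGrammar g B, ?_⟩
  ext x
  simp only [Set.mem_setOf_eq, mem_language_iff]
  constructor
  · intro hx
    refine ⟨filterGrammar_derives hx, ?_⟩
    intro t ht
    exact filterGrammar_avoid hx (by rintro t' ht'; simp at ht') t (List.mem_map_of_mem ht)
  · rintro ⟨hx, hB⟩
    refine filterGrammar_derives_rev hx ?_
    intro t ht
    rw [List.mem_map] at ht
    obtain ⟨t', ht', he⟩ := ht
    have : t' = t := by injection he
    exact this ▸ hB t' ht'
end WHyp

namespace WHyp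
open ContextFreeGrammar

/-! ### Grammar from a DFA with letter substitution and affixes -/

theorem split_unique {T N : Type*} {A B P Q : List (Symbol T N)} {n m : N}
    (hA : ∀ s ∈ A, ∃ t, s = Symbol.terminal t) (hB : ∀ s ∈ B, ∃ t, s = Symbol.terminal t)
    (h : A ++ Symbol.nonterminal n :: B = P ++ Symbol.nonterminal m :: Q) :
    A = P ∧ n = m ∧ B = Q := by
  induction A generalizing P with
  | nil =>
    cases P with
    | nil =>
      simp only [List.nil_append, List.cons.injEq] at h
      exact ⟨rfl, by injection h.1, h.2⟩
    | cons z P' =>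
      simp only [List.nil_append, List.cons_append, List.cons.injEq] at h
      exfalso
      have : Symbol.nonterminal m ∈ B := by
        rw [h.2]
        simp
      obtain ⟨t, ht⟩ := hB _ this
      exact absurd ht (by simp)
  | cons a A' ih =>
    cases P with
    | nil =>
      simp only [List.cons_append, List.nil_append, List.cons.injEq] at h
      obtain ⟨t, ht⟩ := hA a (by simp)
      rw [ht] at h
      exact absurd h.1.symm (by simp)
    | cons z P' =>
      simp only [List.cons_append, List.cons.injEq] at h
      obtain ⟨h1, h2⟩ := h
      obtain ⟨hA', hnm, hBQ⟩ := ih (fun s hs => hA s (by simp [hs])) h2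
      exact ⟨by rw [h1, hA'], hnm, hBQ⟩

theorem no_nt_in_map_terminal {T N : Type*} {n : N} {w : List T} :
    Symbol.nonterminal n ∉ (w.map Symbol.terminal : List (Symbol T N)) := by
  simp

section affix
variable {γ T : Type*} [Fintype γ] {σ : Type} [Fintype σ]

open Classical in
@[reducible] noncomputable def affixGrammar (M : DFA γ σ) (h : γ → T) (p s : List T) :
    ContextFreeGrammar T where
  NT := Option σ
  initial := none
  rules :=
    insert ⟨none, p.map Symbol.terminal ++
        Symbol.nonterminal (some M.start) :: s.map Symbol.terminal⟩
      ((Finset.univ.image fun qa : σ × γ =>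
          (⟨some qa.1, [Symbol.terminal (h qa.2),
            Symbol.nonterminal (some (M.step qa.1 qa.2))]⟩ : ContextFreeRule T (Option σ))) ∪
        (Finset.univ.filter (· ∈ M.accept)).image fun q =>
          (⟨some q, []⟩ : ContextFreeRule T (Option σ)))

theorem mem_affix_rules {M : DFA γ σ} {h : γ → T} {p s : List T}
    {r : ContextFreeRule T (Option σ)} :
    r ∈ (affixGrammar M h p s).rules ↔
      r = ⟨none, p.map Symbol.terminal ++
        Symbol.nonterminal (some M.start) :: s.map Symbol.terminal⟩ ∨
      (∃ q a, r = ⟨some q, [Symbol.terminal (h a),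
        Symbol.nonterminal (some (M.step q a))]⟩) ∨
      (∃ q, q ∈ M.accept ∧ r = ⟨some q, []⟩) := by
  classical
  simp only [affixGrammar, Finset.mem_insert, Finset.mem_union, Finset.mem_image,
    Finset.mem_filter, Finset.mem_univ, true_and]
  constructor
  · rintro (rfl | ⟨⟨q, a⟩, rfl⟩ | ⟨q, hq, rfl⟩)
    · exact Or.inl rfl
    · exact Or.inr (Or.inl ⟨q, a, rfl⟩)
    · exact Or.inr (Or.inr ⟨q, hq, rfl⟩)
  · rintro (rfl | ⟨q, a, rfl⟩ | ⟨q, hq, rfl⟩)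
    · exact Or.inl rfl
    · exact Or.inr (Or.inl ⟨⟨q, a⟩, rfl⟩)
    · exact Or.inr (Or.inr ⟨q, hq, rfl⟩)

theorem affix_derives_mid (M : DFA γ σ) (h : γ → T) (p s : List T) :
    ∀ (w : List γ) (q : σ), (affixGrammar M h p s).Derives [Symbol.nonterminal (some q)]
      ((w.map h).map Symbol.terminal ++ [Symbol.nonterminal (some (M.evalFrom q w))])
  | [], q => by simpa using Derives.refl _
  | a :: w, q => by
    have hstep : (affixGrammar M h p s).Produces [Symbol.nonterminal (some q)]
        [Symbol.terminal (h a), Symbol.nonterminal (some (M.step q a))] := by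
      refine ⟨⟨some q, [Symbol.terminal (h a), Symbol.nonterminal (some (M.step q a))]⟩,
        mem_affix_rules.mpr (Or.inr (Or.inl ⟨q, a, rfl⟩)), ?_⟩
      exact ContextFreeRule.Rewrites.input_output
    refine hstep.trans_derives ?_
    have := (affix_derives_mid M h p s w (M.step q a)).append_left [Symbol.terminal (h a)]
    simpa [evalFrom_cons] using this

/-- The invariant satisfied by all sentential forms of the affix grammar. -/
def AffixGood (M : DFA γ σ) (h : γ → T) (p s : List T)
    (x : List (Symbol T (Option σ))) : Prop :=
  x = [Symbol.nonterminal none] ∨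
  (∃ w : List γ, x = ((p ++ w.map h).map Symbol.terminal) ++
    Symbol.nonterminal (some (M.evalFrom M.start w)) :: s.map Symbol.terminal) ∨
  (∃ w : List γ, M.evalFrom M.start w ∈ M.accept ∧
    x = (p ++ w.map h ++ s).map Symbol.terminal)

theorem affixGood_step {M : DFA γ σ} {h : γ → T} {p s : List T}
    {x y : List (Symbol T (Option σ))} (hx : AffixGood M h p s x)
    (hxy : (affixGrammar M h p s).Produces x y) : AffixGood M h p s y := by
  obtain ⟨r, hr, hrw⟩ := hxy
  obtain ⟨P, Q, hsplit, rfl⟩ := hrw.exists_parts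
  rw [show P ++ [Symbol.nonterminal r.input] ++ Q
    = P ++ Symbol.nonterminal r.input :: Q by simp] at hsplit
  rcases hx with rfl | ⟨w, rfl⟩ | ⟨w, hacc, rfl⟩
  · -- x = [nt none]
    obtain ⟨hP, hin, hQ⟩ := singleton_eq_append hsplit
    subst hP; subst hQ
    have hinput : r.input = none := by injection hin.symm
    rcases mem_affix_rules.mp hr with rfl | ⟨q, a, rfl⟩ | ⟨q, hq, rfl⟩
    · refine Or.inr (Or.inl ⟨[], ?_⟩)
      simp [DFA.evalFrom]
    · exact absurd hinput (by simp)
    · exact absurd hinput (by simp)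
  · -- middle case
    have hsplit' : ((p ++ w.map h).map Symbol.terminal) ++
        Symbol.nonterminal (some (M.evalFrom M.start w)) :: s.map Symbol.terminal
        = P ++ Symbol.nonterminal r.input :: Q := hsplit
    obtain ⟨hP, hin, hQ⟩ := split_unique
      (fun s hs => by rcases List.mem_map.mp hs with ⟨t, _, rfl⟩; exact ⟨t, rfl⟩)
      (fun s hs => by rcases List.mem_map.mp hs with ⟨t, _, rfl⟩; exact ⟨t, rfl⟩) hsplit'
    subst hP; subst hQ
    rcases mem_affix_rules.mp hr with rfl | ⟨q, a, rfl⟩ | ⟨q, hq, rfl⟩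
    · exact absurd hin (by simp)
    · have hq : q = M.evalFrom M.start w := (Option.some_injective _ hin).symm
      subst hq
      refine Or.inr (Or.inl ⟨w ++ [a], ?_⟩)
      rw [DFA.evalFrom_append_singleton]
      simp
    · have hq' : q = M.evalFrom M.start w := (Option.some_injective _ hin).symm
      subst hq'
      refine Or.inr (Or.inr ⟨w, hq, ?_⟩)
      simp
  · -- all-terminal case: impossible
    exfalso
    have : Symbol.nonterminal r.input ∈ (p ++ w.map h ++ s).map Symbol.terminal := by
      rw [hsplit]
      simp
    exact no_nt_in_map_terminal this

theorem affixGood_derives {M : DFA γ σ} {h : γ → T} {p s : List T}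
    {x y : List (Symbol T (Option σ))} (hx : AffixGood M h p s x)
    (hxy : (affixGrammar M h p s).Derives x y) : AffixGood M h p s y := by
  induction hxy with
  | refl => exact hx
  | tail _ last ih => exact affixGood_step ih last

theorem affixGrammar_language (M : DFA γ σ) (h : γ → T) (p s : List T) :
    (affixGrammar M h p s).language = {x | ∃ w ∈ M.accepts, x = p ++ w.map h ++ s} := by
  ext x
  simp only [Set.mem_setOf_eq, mem_language_iff]
  constructor
  · intro hx
    have hgood := affixGood_derives (Or.inl rfl) hx
    rcases hgood with heq | ⟨w, heq⟩ | ⟨w, hacc, heq⟩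
    · exact absurd heq (map_terminal_ne_single_nonterminal x _)
    · exfalso
      have : Symbol.nonterminal (some (M.evalFrom M.start w))
          ∈ (x.map Symbol.terminal : List (Symbol T (Option σ))) := by
        rw [heq]; simp
      exact no_nt_in_map_terminal this
    · refine ⟨w, hacc, ?_⟩
      exact List.map_injective_iff.mpr (fun a b hab => by injection hab) heq
  · rintro ⟨w, hacc, rfl⟩
    have hstart : (affixGrammar M h p s).Produces [Symbol.nonterminal none]
        (p.map Symbol.terminal ++
          Symbol.nonterminal (some M.start) :: s.map Symbol.terminal) := by
      refine ⟨_, mem_affix_rules.mpr (Or.inl rfl), ?_⟩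
      exact ContextFreeRule.Rewrites.input_output
    have hmid := ((affix_derives_mid M h p s w M.start).append_left
      (p.map Symbol.terminal)).append_right (s.map Symbol.terminal)
    have hfin : (affixGrammar M h p s).Produces
        ((p.map Symbol.terminal ++ (w.map h).map Symbol.terminal) ++
          [Symbol.nonterminal (some (M.evalFrom M.start w))] ++ s.map Symbol.terminal)
        ((p.map Symbol.terminal ++ (w.map h).map Symbol.terminal) ++ [] ++
          s.map Symbol.terminal) := by
      refine ⟨⟨some (M.evalFrom M.start w), []⟩,
        mem_affix_rules.mpr (Or.inr (Or.inr ⟨_, hacc, rfl⟩)), ?_⟩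
      exact ContextFreeRule.rewrites_of_exists_parts _ _ _
    show (affixGrammar M h p s).Derives _ _
    rw [show (List.map Symbol.terminal (p ++ List.map h w ++ s) : List (Symbol T (Option σ)))
      = (p.map Symbol.terminal ++ (w.map h).map Symbol.terminal) ++ [] ++
        s.map Symbol.terminal by simp]
    exact hstart.trans_derives (Derives.trans (by simpa using hmid) hfin.single)
  
end affix

theorem cf_affix {γ T : Type*} [Fintype γ] {L : Language γ} (hL : L.IsRegular)
    (h : γ → T) (p s : List T) :
    Language.IsContextFree {x : List T | ∃ w ∈ L, x = p ++ w.map h ++ s} := by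
  obtain ⟨σ, _, M, rfl⟩ := hL
  exact ⟨affixGrammar M h p s, affixGrammar_language M h p s⟩

end WHyp

namespace WHyp

/-! ### hashWord lemmas -/

theorem hashWord_map {α β : Type*} (ι : α → β) (u v w : List α) :
    hashWord (u.map ι) (v.map ι) (w.map ι) = (hashWord u v w).map (Option.map ι) := by
  simp [hashWord, List.map_map, Function.comp_def]

theorem hashWord_one_mid {γ : Type*} (c : γ) (v : List γ) :
    hashWord [c] v [c] = [some c, none] ++ v.map some ++ [none, some c] := by
  simp [hashWord]

theorem hashWord_one_right {γ : Type*} (c : γ) (u : List γ) :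
    hashWord u [c] [c] = [] ++ u.map some ++ [none, some c, none, some c] := by
  simp [hashWord]

/-! ### Backward direction -/

def adjZero {α S : Type*} [Semigroup S] (f : α → S) : Option α → WithZero S
  | none => 0
  | some a => (f a : WithZero S)

theorem backward {S : Type*} [Semigroup S] (hyp : WordHyperbolic S) :
    WordHyperbolic (WithZero S) := by
  classical
  obtain ⟨α, iα, f, -, R, hreg, ⟨hnil, hcomb⟩, hcf⟩ := hyp
  haveI := iα
  set LI : Language (Option α) := {x | ∃ u ∈ R, x = u.map some} with hLI
  set LO : Language (Option α) := {x | x = [(none : Option α)]} with hLO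
  set R' : Language (Option α) := {x | x ∈ LI ∨ x ∈ LO} with hR'
  have hreg' : R'.IsRegular :=
    isRegular_union (isRegular_image hreg (Option.some_injective α)) (isRegular_singleton none)
  have hmap : ∀ u : List α,
      evalS (adjZero f) (u.map some) = (evalS f u).map (WithZero.coe : S → WithZero S) :=
    fun u => evalS_map f (adjZero f) some WithZero.coe
      (fun x y => WithZero.coe_mul x y) u (fun a _ => rfl)
  have heval0 : evalS (adjZero f) [none] = some 0 := rfl
  have hRne : ∀ {u₀ : List α}, u₀ ∈ R → u₀ ≠ [] := fun hu₀ he => hnil (he ▸ hu₀)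
  have hevalR : ∀ {u₀ : List α}, u₀ ∈ R →
      ∃ a, evalS f u₀ = some a ∧ evalS (adjZero f) (u₀.map some) = some (a : WithZero S) := by
    intro u₀ hu₀
    obtain ⟨a, ha⟩ := evalS_isSome f (hRne hu₀)
    exact ⟨a, ha, by rw [hmap, ha]; rfl⟩
  have hR'ne : ∀ {v : List (Option α)}, v ∈ R' → v ≠ [] := by
    rintro v (⟨v₀, hv₀, rfl⟩ | rfl)
    · intro h
      rw [List.map_eq_nil_iff] at h
      exact hnil (h ▸ hv₀)
    · simp
  have hcomb' : IsCombing (adjZero f) R' := by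
    constructor
    · rintro (⟨u₀, hu₀, h⟩ | h)
      · rw [Eq.comm, List.map_eq_nil_iff] at h
        exact hnil (h ▸ hu₀)
      · exact List.cons_ne_nil _ _ (show ([] : List (Option α)) = [none] from h).symm
    · intro s
      by_cases hs : s = 0
      · exact ⟨[none], Or.inr rfl, by rw [hs]; exact heval0⟩
      · obtain ⟨a, ha⟩ := WithZero.ne_zero_iff_exists.mp hs
        obtain ⟨w, hw, hww⟩ := hcomb a
        refine ⟨w.map some, Or.inl ⟨w, hw, rfl⟩, ?_⟩
        rw [hmap, hww, Option.map_some, ha]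
  have key : mulTable (adjZero f) R' =
      {x | x ∈ ({x | ∃ w ∈ mulTable f R, x = w.map (Option.map some)} :
            Language (Option (Option α))) ∨
        x ∈ ({x | x ∈ ({x | ∃ w ∈ R', x = [some none, none] ++ w.map some ++ [none, some none]} :
                Language (Option (Option α))) ∨
          x ∈ ({x | ∃ w ∈ R, x = [] ++ w.map (fun a => (some (some a) : Option (Option α))) ++
                [none, some none, none, some none]} : Language (Option (Option α)))} :
            Language (Option (Option α)))} := by
    ext x
    constructor
    · rintro ⟨u, v, w, hu, hv, hw, ⟨su, sv, hsu, hsv, hsw⟩, rfl⟩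
      rcases hu with ⟨u₀, hu₀, rfl⟩ | rfl
      · -- u is an image word
        obtain ⟨a, hfa, hga⟩ := hevalR hu₀
        have hsua : su = (a : WithZero S) := by
          rw [hga] at hsu
          exact (Option.some_injective _ hsu).symm
        rcases hv with ⟨v₀, hv₀, rfl⟩ | rfl
        · obtain ⟨b, hfb, hgb⟩ := hevalR hv₀
          have hsvb : sv = (b : WithZero S) := by
            rw [hgb] at hsv
            exact (Option.some_injective _ hsv).symm
          rcases hw with ⟨w₀, hw₀, rfl⟩ | rfl
          · -- all three images: the relabeled table
            obtain ⟨c, hfc, hgc⟩ := hevalR hw₀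
            have hcab : c = a * b := by
              rw [hgc, hsua, hsvb, ← WithZero.coe_mul] at hsw
              exact WithZero.coe_inj.mp (Option.some_injective _ hsw)
            exact Or.inl ⟨hashWord u₀ v₀ w₀,
              ⟨u₀, v₀, w₀, hu₀, hv₀, hw₀, ⟨a, b, hfa, hfb, hcab ▸ hfc⟩, rfl⟩,
              hashWord_map some u₀ v₀ w₀⟩
          · -- w = [none] but product nonzero: impossible
            exfalso
            rw [heval0, hsua, hsvb, ← WithZero.coe_mul] at hsw
            exact WithZero.coe_ne_zero ((Option.some_injective _ hsw)).symm
        · -- v = [none]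
          have hsv0 : sv = 0 := by
            rw [heval0] at hsv
            exact (Option.some_injective _ hsv).symm
          rcases hw with ⟨w₀, hw₀, rfl⟩ | rfl
          · exfalso
            obtain ⟨c, hfc, hgc⟩ := hevalR hw₀
            rw [hgc, hsv0, mul_zero] at hsw
            exact WithZero.coe_ne_zero (Option.some_injective _ hsw)
          · exact Or.inr (Or.inr ⟨u₀, hu₀, by
              rw [hashWord_one_right]
              simp [List.map_map, Function.comp_def]⟩)
      · -- u = [none]
        have hsu0 : su = 0 := by
          rw [heval0] at hsu
          exact (Option.some_injective _ hsu).symm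
        rcases hw with ⟨w₀, hw₀, rfl⟩ | rfl
        · exfalso
          obtain ⟨c, hfc, hgc⟩ := hevalR hw₀
          rw [hgc, hsu0, zero_mul] at hsw
          exact WithZero.coe_ne_zero (Option.some_injective _ hsw)
        · exact Or.inr (Or.inl ⟨v, hv, hashWord_one_mid none v⟩)
    · rintro (⟨y, ⟨u, v, w, hu, hv, hw, ⟨a, b, hfa, hfb, hfw⟩, rfl⟩, rfl⟩ |
        ⟨v, hv, rfl⟩ | ⟨u₀, hu₀, rfl⟩)
      · refine ⟨u.map some, v.map some, w.map some, Or.inl ⟨u, hu, rfl⟩, Or.inl ⟨v, hv, rfl⟩,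
          Or.inl ⟨w, hw, rfl⟩, ⟨(a : WithZero S), (b : WithZero S), ?_, ?_, ?_⟩,
          (hashWord_map some u v w).symm⟩
        · rw [hmap, hfa]; rfl
        · rw [hmap, hfb]; rfl
        · rw [hmap, hfw, Option.map_some, WithZero.coe_mul]
      · obtain ⟨sv, hsv⟩ := evalS_isSome (adjZero f) (hR'ne hv)
        exact ⟨[none], v, [none], Or.inr rfl, hv, Or.inr rfl,
          ⟨0, sv, heval0, hsv, by rw [zero_mul]; exact heval0⟩,
          (hashWord_one_mid none v)⟩
      · obtain ⟨a, hfa, hga⟩ := hevalR hu₀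
        exact ⟨u₀.map some, [none], [none], Or.inl ⟨u₀, hu₀, rfl⟩, Or.inr rfl, Or.inr rfl,
          ⟨(a : WithZero S), 0, hga, heval0, by rw [mul_zero]; exact heval0⟩,
          by rw [hashWord_one_right]; simp [List.map_map, Function.comp_def]⟩
  refine ⟨Option α, inferInstance, adjZero f, ?_, R', hreg', hcomb', ?_⟩
  · intro s
    obtain ⟨w, -, hw⟩ := hcomb'.2 s
    exact ⟨w, hw⟩
  · rw [key]
    exact cf_union (cf_relabel hcf (Option.map some))
      (cf_union (cf_affix hreg' some [some none, none] [none, some none])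
        (cf_affix hreg (fun a => (some (some a) : Option (Option α)))
          [] [none, some none, none, some none]))

end WHyp

namespace WHyp

/-! ### Forward direction -/

theorem mem_hashWord_some {α : Type*} {u v w : List α} {a : α}
    (h : (some a : Option α) ∈ hashWord u v w) : a ∈ u ∨ a ∈ v ∨ a ∈ w := by
  have h' : (some a : Option α) ∈ u.map some ++ none :: v.map some ++
      none :: w.reverse.map some := h
  rcases List.mem_append.mp h' with h1 | h1
  · rcases List.mem_append.mp h1 with h2 | h2
    · rcases List.mem_map.mp h2 with ⟨b, hb, hba⟩
      exact Or.inl ((Option.some_injective _ hba) ▸ hb)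
    · rcases List.mem_cons.mp h2 with h3 | h3
      · exact absurd h3 (by simp)
      · rcases List.mem_map.mp h3 with ⟨b, hb, hba⟩
        exact Or.inr (Or.inl ((Option.some_injective _ hba) ▸ hb))
  · rcases List.mem_cons.mp h1 with h2 | h2
    · exact absurd h2 (by simp)
    · rcases List.mem_map.mp h2 with ⟨b, hb, hba⟩
      exact Or.inr (Or.inr (List.mem_reverse.mp ((Option.some_injective _ hba) ▸ hb)))

theorem some_mem_hashWord_left {α : Type*} {u : List α} (v w : List α) {a : α} (ha : a ∈ u) :
    (some a : Option α) ∈ hashWord u v w :=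
  List.mem_append.mpr (Or.inl (List.mem_append.mpr (Or.inl (List.mem_map.mpr ⟨a, ha, rfl⟩))))

theorem some_mem_hashWord_mid {α : Type*} (u : List α) {v : List α} (w : List α) {a : α}
    (ha : a ∈ v) : (some a : Option α) ∈ hashWord u v w :=
  List.mem_append.mpr (Or.inl (List.mem_append.mpr (Or.inr (List.mem_cons.mpr
    (Or.inr (List.mem_map.mpr ⟨a, ha, rfl⟩))))))

theorem some_mem_hashWord_right {α : Type*} (u v : List α) {w : List α} {a : α}
    (ha : a ∈ w) : (some a : Option α) ∈ hashWord u v w :=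
  List.mem_append.mpr (Or.inr (List.mem_cons.mpr (Or.inr
    (List.mem_map.mpr ⟨a, List.mem_reverse.mpr ha, rfl⟩))))

theorem forward {S : Type*} [Semigroup S] (hS : Nonempty S)
    (hyp : WordHyperbolic (WithZero S)) : WordHyperbolic S := by
  classical
  obtain ⟨α, iα, g, -, R, hreg, ⟨hnil, hcomb⟩, hcf⟩ := hyp
  haveI := iα
  set B : Set α := {a | g a = 0} with hB
  set f : α → S := fun a => if h : g a = 0 then Classical.choice hS else WithZero.unzero h
    with hf
  have hcoe : ∀ a : α, a ∉ B → (WithZero.coe (f a) : WithZero S) = g a := by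
    intro a ha
    have hne : g a ≠ 0 := ha
    rw [hf]
    simp only [dif_neg hne]
    exact WithZero.coe_unzero hne
  have hmap : ∀ u : List α, (∀ a ∈ u, a ∉ B) →
      evalS g u = (evalS f u).map (WithZero.coe : S → WithZero S) := by
    intro u hu
    have := evalS_map f g id WithZero.coe (fun x y => WithZero.coe_mul x y) u
      (fun a ha => (hcoe a (hu a ha)).symm)
    rwa [List.map_id] at this
  set RS : Language α := {x | x ∈ R ∧ x ∈ ({x : List α | ∀ b ∈ x, b ∉ B} : Language α)}
    with hRS
  have hregS : RS.IsRegular := isRegular_inter hreg (isRegular_avoid B)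
  have hfree : ∀ {w : List α} {s' : S}, evalS g w = some (WithZero.coe s') →
      ∀ a ∈ w, a ∉ B := by
    intro w s' hw a ha haB
    have h0 : evalS g w = some 0 := evalS_eq_zero g ⟨a, ha, haB⟩
    rw [hw] at h0
    exact WithZero.coe_ne_zero (Option.some_injective _ h0)
  have hRne : ∀ {u₀ : List α}, u₀ ∈ R → u₀ ≠ [] := fun hu₀ he => hnil (he ▸ hu₀)
  have hcombS : IsCombing f RS := by
    constructor
    · rintro ⟨h1, -⟩
      exact hnil h1
    · intro s
      obtain ⟨w, hw, hww⟩ := hcomb (WithZero.coe s)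
      have hfr : ∀ a ∈ w, a ∉ B := hfree hww
      obtain ⟨s', hs'⟩ := evalS_isSome f (hRne hw)
      have hgs : evalS g w = some (WithZero.coe s') := by
        rw [hmap w hfr, hs']
        rfl
      rw [hww] at hgs
      have hss : s = s' := WithZero.coe_inj.mp (Option.some_injective _ hgs)
      exact ⟨w, ⟨hw, hfr⟩, by rw [hs', hss]⟩
  set B' : Set (Option α) := {t | ∃ a ∈ B, t = some a} with hB'
  have key : mulTable f RS = {x | x ∈ mulTable g R ∧ ∀ t ∈ x, t ∉ B'} := by
    ext x
    constructor
    · rintro ⟨u, v, w, ⟨hu, huf⟩, ⟨hv, hvf⟩, ⟨hw, hwf⟩, ⟨su, sv, hsu, hsv, hsw⟩, rfl⟩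
      refine ⟨⟨u, v, w, hu, hv, hw,
        ⟨WithZero.coe su, WithZero.coe sv, ?_, ?_, ?_⟩, rfl⟩, ?_⟩
      · rw [hmap u huf, hsu]; rfl
      · rw [hmap v hvf, hsv]; rfl
      · rw [hmap w hwf, hsw, Option.map_some, WithZero.coe_mul]
      · rintro t ht ⟨a, haB, rfl⟩
        rcases mem_hashWord_some ht with h | h | h
        · exact huf a h haB
        · exact hvf a h haB
        · exact hwf a h haB
    · rintro ⟨⟨u, v, w, hu, hv, hw, ⟨su, sv, hsu, hsv, hsw⟩, rfl⟩, havoid⟩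
      have huf : ∀ a ∈ u, a ∉ B := fun a ha haB =>
        havoid (some a) (some_mem_hashWord_left v w ha) ⟨a, haB, rfl⟩
      have hvf : ∀ a ∈ v, a ∉ B := fun a ha haB =>
        havoid (some a) (some_mem_hashWord_mid u w ha) ⟨a, haB, rfl⟩
      have hwf : ∀ a ∈ w, a ∉ B := fun a ha haB =>
        havoid (some a) (some_mem_hashWord_right u v ha) ⟨a, haB, rfl⟩
      obtain ⟨a, hfa⟩ := evalS_isSome f (hRne hu)
      obtain ⟨b, hfb⟩ := evalS_isSome f (hRne hv)
      obtain ⟨c, hfc⟩ := evalS_isSome f (hRne hw)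
      have hga : evalS g u = some (WithZero.coe a) := by rw [hmap u huf, hfa]; rfl
      have hgb : evalS g v = some (WithZero.coe b) := by rw [hmap v hvf, hfb]; rfl
      have hgc : evalS g w = some (WithZero.coe c) := by rw [hmap w hwf, hfc]; rfl
      have hsua : su = WithZero.coe a := by
        rw [hga] at hsu
        exact (Option.some_injective _ hsu).symm
      have hsvb : sv = WithZero.coe b := by
        rw [hgb] at hsv
        exact (Option.some_injective _ hsv).symm
      have hcab : c = a * b := by
        rw [hgc, hsua, hsvb, ← WithZero.coe_mul] at hsw
        exact WithZero.coe_inj.mp (Option.some_injective _ hsw)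
      exact ⟨u, v, w, ⟨hu, huf⟩, ⟨hv, hvf⟩, ⟨hw, hwf⟩,
        ⟨a, b, hfa, hfb, hcab ▸ hfc⟩, rfl⟩
  refine ⟨α, iα, f, ?_, RS, hregS, hcombS, ?_⟩
  · intro s
    obtain ⟨w, -, hw⟩ := hcombS.2 s
    exact ⟨w, hw⟩
  · rw [key]
    exact cf_filter hcf B'

/-! ### Degenerate case: `S` empty -/

theorem hyp_of_isEmpty {S : Type*} [Semigroup S] (hS : ¬ Nonempty S) : WordHyperbolic S := by
  refine ⟨Empty, inferInstance, fun a : Empty => (Empty.elim a : S), fun s => absurd ⟨s⟩ hS,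
    {x | False}, isRegular_false, ⟨fun h => h, fun s => absurd ⟨s⟩ hS⟩, ?_⟩
  have : mulTable (fun a : Empty => (Empty.elim a : S)) {x | False} =
      {x : List (Option Empty) | ∃ w ∈ ({x : List (Option Empty) | False} :
        Language (Option Empty)), x = [] ++ w.map id ++ []} := by
    ext x
    constructor
    · rintro ⟨u, v, w, hu, -⟩
      exact hu.elim
    · rintro ⟨w, hw, -⟩
      exact hw.elim
  rw [this]
  exact cf_affix isRegular_false id [] []

theorem hypZero_of_isEmpty {S : Type*} [Semigroup S] (hS : ¬ Nonempty S) :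
    WordHyperbolic (WithZero S) := by
  have hs0 : ∀ s : WithZero S, s = 0 := by
    intro s
    by_cases h : s = 0
    · exact h
    · obtain ⟨a, -⟩ := WithZero.ne_zero_iff_exists.mp h
      exact absurd ⟨a⟩ hS
  refine ⟨Unit, inferInstance, fun _ => 0, ?_, {x | x = [()]}, isRegular_singleton (),
    ⟨?_, ?_⟩, ?_⟩
  · intro s
    exact ⟨[()], by rw [hs0 s]; rfl⟩
  · intro h
    exact List.cons_ne_nil _ _ (show ([] : List Unit) = [()] from h).symm
  · intro s
    exact ⟨[()], rfl, by rw [hs0 s]; rfl⟩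
  · have : mulTable (fun _ : Unit => (0 : WithZero S)) {x | x = [()]} =
        {x | ∃ w ∈ ({x : List Unit | x = [()]} : Language Unit),
          x = [some (), none] ++ w.map (fun _ => (some () : Option Unit)) ++ [none, some ()]} := by
      ext x
      constructor
      · rintro ⟨u, v, w, rfl, rfl, rfl, -, rfl⟩
        exact ⟨[()], rfl, by simp [hashWord]⟩
      · rintro ⟨w, rfl, rfl⟩
        refine ⟨[()], [()], [()], rfl, rfl, rfl, ⟨0, 0, rfl, rfl, ?_⟩, by simp [hashWord]⟩
        rw [mul_zero]
        rfl
    rw [this]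
    exact cf_affix (isRegular_singleton ()) (fun _ => (some () : Option Unit))
      [some (), none] [none, some ()]

end WHyp


/-- `S⁰` (the semigroup `S` with a zero adjoined) is word hyperbolic if and only
if `S` is word hyperbolic. -/
theorem withZero_hyperbolic_iff (S : Type*) [Semigroup S] :
    WordHyperbolic (WithZero S) ↔ WordHyperbolic S := by
  by_cases hS : Nonempty S
  · exact ⟨WHyp.forward hS, WHyp.backward⟩
  · exact ⟨fun _ => WHyp.hyp_of_isEmpty hS, fun _ => WHyp.hypZero_of_isEmpty hS⟩
end

section
/- Every finitely generated subsemigroup of a free semigroup is word hyperbolic. -/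
namespace WH

inductive Ph | u0 | u1 | v0 | v1 | f2 deriving DecidableEq
instance : Fintype Ph := ⟨⟨{.u0, .u1, .v0, .v1, .f2}, by decide⟩, fun x => by cases x <;> decide⟩

abbrev RS (σ : Type) := Option (Bool × σ × ℕ)
abbrev NT (σ : Type) := Option (Ph × RS σ)
abbrev Sym (σ : Type) := Symbol (Option σ) (NT σ)

variable {σ : Type} {Δ : Type*}

def st (i : Ph) (ρ : RS σ) : NT σ := some (i, ρ)

lemma st_inj {i i' : Ph} {ρ ρ' : RS σ} (h : st i ρ = st i' ρ') : i = i' ∧ ρ = ρ' := by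
  simpa [st] using h

variable (g : σ → List Δ)

def Hh (c : List σ) : List Δ := (c.map g).flatten

@[simp] lemma Hh_nil : Hh g [] = [] := rfl
@[simp] lemma Hh_cons (a : σ) (c : List σ) : Hh g (a :: c) = g a ++ Hh g c := rfl
@[simp] lemma Hh_append (c d : List σ) : Hh g (c ++ d) = Hh g c ++ Hh g d := by
  simp [Hh]

variable {g}

lemma Hh_ne_nil (hg : ∀ a, g a ≠ []) {c : List σ} (hc : c ≠ []) : Hh g c ≠ [] := by
  cases c with
  | nil => exact absurd rfl hc
  | cons a c => simp [Hh_cons, hg a]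

lemma eq_nil_of_Hh (hg : ∀ a, g a ≠ []) {c : List σ} (hc : Hh g c = []) : c = [] := by
  by_contra h
  exact Hh_ne_nil hg h hc

def flipRS : RS σ → RS σ
  | none => none
  | some (s, b, k) => some (!s, b, k)

@[simp] lemma flipRS_flipRS (ρ : RS σ) : flipRS (flipRS ρ) = ρ := by
  rcases ρ with _ | ⟨s, b, k⟩ <;> simp [flipRS]

variable (g)

inductive Step : RS σ → σ → RS σ → Prop
  | fromNone (a : σ) : Step none a (some (true, a, 0))
  | stay (b k a) (hk : k < (g b).length) (hpre : g a <+: (g b).drop k)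
      (hlt : k + (g a).length < (g b).length) :
      Step (some (false, b, k)) a (some (false, b, k + (g a).length))
  | exact (b k a) (hk : k < (g b).length) (heq : g a = (g b).drop k) :
      Step (some (false, b, k)) a none
  | overtake (b k a) (hk : k < (g b).length) (hpre : (g b).drop k <+: g a)
      (hlt : (g b).length - k < (g a).length) :
      Step (some (false, b, k)) a (some (true, a, (g b).length - k))

def ValidRS : RS σ → Prop
  | none => True
  | some (_, b, k) => k < (g b).length

def Bal : RS σ → List Δ → List Δ → Prop
  | none, X, Y => X = Y
  | some (true, b, k), X, Y => k < (g b).length ∧ X = Y ++ (g b).drop k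
  | some (false, b, k), X, Y => k < (g b).length ∧ Y = X ++ (g b).drop k

def Fut : RS σ → List Δ → List Δ → Prop
  | none, X, Y => X = Y
  | some (true, b, k), X, Y => k < (g b).length ∧ (g b).drop k ++ X = Y
  | some (false, b, k), X, Y => k < (g b).length ∧ X = (g b).drop k ++ Y

variable {g}

lemma bal_flip {ρ : RS σ} {X Y : List Δ} : Bal g (flipRS ρ) X Y ↔ Bal g ρ Y X := by
  rcases ρ with _ | ⟨_ | _, b, k⟩ <;> simp [Bal, flipRS, eq_comm]

lemma fut_flip {ρ : RS σ} {X Y : List Δ} : Fut g (flipRS ρ) X Y ↔ Fut g ρ Y X := by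
  rcases ρ with _ | ⟨_ | _, b, k⟩ <;> simp [Fut, flipRS, eq_comm]

lemma fut_valid {ρ : RS σ} {X Y : List Δ} (h : Fut g ρ X Y) : ValidRS g ρ := by
  rcases ρ with _ | ⟨_ | _, b, k⟩ <;> simp_all [Fut, ValidRS]

lemma step_valid {ρ ρ' : RS σ} {a : σ} (hg : ∀ a, g a ≠ []) (h : Step g ρ a ρ') :
    ValidRS g ρ ∧ ValidRS g ρ' := by
  cases h with
  | fromNone a => exact ⟨trivial, by simpa [ValidRS] using List.length_pos_iff.2 (hg a)⟩
  | stay b k a hk hpre hlt => exact ⟨hk, hlt⟩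
  | exact b k a hk heq => exact ⟨hk, trivial⟩
  | overtake b k a hk hpre hlt => exact ⟨hk, hlt⟩

lemma step_bal {ρ ρ' : RS σ} {a : σ} {X Y : List Δ} (hg : ∀ a, g a ≠ [])
    (h : Step g ρ a ρ') (hb : Bal g ρ X Y) : Bal g ρ' (X ++ g a) Y := by
  cases h with
  | fromNone a =>
    rw [Bal] at hb; subst hb
    exact ⟨List.length_pos_iff.2 (hg a), by simp⟩
  | stay b k a hk hpre hlt =>
    obtain ⟨_, hY⟩ := hb
    obtain ⟨t, ht⟩ := hpre
    refine ⟨hlt, ?_⟩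
    have hdrop : (g b).drop (k + (g a).length) = t := by
      rw [← List.drop_drop, ← ht, List.drop_left]
    rw [hY, ← ht, hdrop, List.append_assoc]
  | exact b k a hk heq =>
    obtain ⟨_, hY⟩ := hb
    rw [Bal, hY, heq]
  | overtake b k a hk hpre hlt =>
    obtain ⟨_, hY⟩ := hb
    obtain ⟨t, ht⟩ := hpre
    refine ⟨hlt, ?_⟩
    have hlen : ((g b).drop k).length = (g b).length - k := by simp
    have hdrop : (g a).drop ((g b).length - k) = t := by
      rw [← ht, ← hlen, List.drop_left]
    rw [hY, hdrop, ← ht]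
    simp
lemma step_fut (hg : ∀ a, g a ≠ []) {ρ : RS σ} {X Y : List Δ} {a : σ}
    (hρ : ρ = none ∨ ∃ b k, ρ = some (false, b, k))
    (h : Fut g ρ (g a ++ X) Y) : ∃ ρ', Step g ρ a ρ' ∧ Fut g ρ' X Y := by
  rcases hρ with rfl | ⟨b, k, rfl⟩
  · refine ⟨some (true, a, 0), Step.fromNone a, List.length_pos_iff.2 (hg a), ?_⟩
    simpa [Fut] using h
  · obtain ⟨hk, heq⟩ := h
    rcases List.append_eq_append_iff.1 heq with ⟨t, ht, hX⟩ | ⟨t, ht, hY⟩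
    · rcases eq_or_ne t [] with rfl | htne
      · refine ⟨none, Step.exact b k a hk (by simpa using ht.symm), ?_⟩
        simpa [Fut] using hX
      · have hlen := congrArg List.length ht
        simp [List.length_drop] at hlen
        have hlt : k + (g a).length < (g b).length := by
          have : t.length ≠ 0 := fun h0 => htne (List.length_eq_zero_iff.1 h0)
          omega
        refine ⟨some (false, b, k + (g a).length), Step.stay b k a hk ⟨t, ht.symm⟩ hlt, hlt, ?_⟩
        have hdrop : (g b).drop (k + (g a).length) = t := by
          rw [← List.drop_drop, ht, List.drop_left]
        rw [hdrop]; exact hX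
    · rcases eq_or_ne t [] with rfl | htne
      · refine ⟨none, Step.exact b k a hk (by simpa using ht), ?_⟩
        simpa [Fut] using hY.symm
      · have hlen := congrArg List.length ht
        simp [List.length_drop] at hlen
        have hlt : (g b).length - k < (g a).length := by
          have : t.length ≠ 0 := fun h0 => htne (List.length_eq_zero_iff.1 h0)
          omega
        refine ⟨some (true, a, (g b).length - k),
          Step.overtake b k a hk ⟨t, ht.symm⟩ hlt, hlt, ?_⟩
        have hdrop : (g a).drop ((g b).length - k) = t := by
          rw [ht, ← List.length_drop, List.drop_left]
        rw [hdrop]; exact hY.symm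

lemma wstep_bal {ρ ρ' : RS σ} {a : σ} {X Y : List Δ} (hg : ∀ a, g a ≠ [])
    (h : Step g (flipRS ρ) a (flipRS ρ')) (hb : Bal g ρ X Y) : Bal g ρ' X (Y ++ g a) :=
  bal_flip.1 (step_bal hg h (bal_flip.2 hb))

lemma wstep_fut (hg : ∀ a, g a ≠ []) {ρ : RS σ} {X Y : List Δ} {a b : σ} {k : ℕ}
    (hρ : ρ = some (true, b, k)) (h : Fut g ρ X (g a ++ Y)) :
    ∃ ρ', Step g (flipRS ρ) a (flipRS ρ') ∧ Fut g ρ' X Y := by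
  have h' : Fut g (flipRS ρ) (g a ++ Y) X := fut_flip.2 h
  have hρ' : flipRS ρ = none ∨ ∃ b k, flipRS ρ = some (false, b, k) := by
    subst hρ; exact Or.inr ⟨b, k, rfl⟩
  obtain ⟨ρ₁, hstep, hfut⟩ := step_fut hg hρ' h'
  refine ⟨flipRS ρ₁, by rwa [flipRS_flipRS], ?_⟩
  exact fut_flip.1 (by rwa [flipRS_flipRS])
def uvStep : Ph → Ph
  | .u0 => .u1
  | .u1 => .u1
  | .v0 => .v1
  | .v1 => .v1
  | .f2 => .f2

variable (g) in
inductive IsRule : ContextFreeRule (Option σ) (NT σ) → Prop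
  | uv (i : Ph) (hi : i ≠ .f2) (a : σ) (ρ ρ' : RS σ) (hs : Step g ρ a ρ') :
      IsRule ⟨st i ρ, [.terminal (some a), .nonterminal (st (uvStep i) ρ')]⟩
  | wm (i : Ph) (a : σ) (ρ ρ' : RS σ) (hs : Step g (flipRS ρ) a (flipRS ρ')) :
      IsRule ⟨st i ρ, [.nonterminal (st i ρ'), .terminal (some a)]⟩
  | hash1 (ρ : RS σ) (hv : ValidRS g ρ) :
      IsRule ⟨st .u1 ρ, [.terminal none, .nonterminal (st .v0 ρ)]⟩
  | hash2 (ρ : RS σ) (hv : ValidRS g ρ) :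
      IsRule ⟨st .v1 ρ, [.terminal none, .nonterminal (st .f2 ρ)]⟩
  | fin : IsRule ⟨st .f2 none, []⟩

section Finiteness

variable [Fintype σ] (g)

/-- Bound on all residual indices appearing in rules. -/
noncomputable def KB : ℕ := Finset.univ.sup (fun b : σ => (g b).length)

lemma length_le_KB (b : σ) : (g b).length ≤ KB g :=
  Finset.le_sup (f := fun b : σ => (g b).length) (Finset.mem_univ b)

def SR : Set (RS σ) :=
  insert none (some '' ((Set.univ : Set Bool) ×ˢ (Set.univ : Set σ) ×ˢ Set.Iic (KB g)))

lemma SR_finite : (SR g).Finite :=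
  Set.Finite.insert _ (Set.Finite.image _
    (Set.finite_univ.prod (Set.finite_univ.prod (Set.finite_Iic _))))

lemma mem_SR {ρ : RS σ} (h : ∀ s b k, ρ = some (s, b, k) → k ≤ KB g) : ρ ∈ SR g := by
  rcases ρ with _ | ⟨s, b, k⟩
  · exact Set.mem_insert _ _
  · exact Set.mem_insert_of_mem _ ⟨(s, b, k), ⟨trivial, trivial, h s b k rfl⟩, rfl⟩

lemma mem_SR_of_valid {ρ : RS σ} (h : ValidRS g ρ) : ρ ∈ SR g := by
  refine mem_SR g fun s b k hk => ?_
  subst hk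
  exact le_of_lt (lt_of_lt_of_le h (length_le_KB g b))

lemma mem_SR_of_step_left {ρ ρ' : RS σ} {a : σ} (h : Step g ρ a ρ') : ρ ∈ SR g := by
  refine mem_SR g fun s b k hk => ?_
  cases h with
  | fromNone a => exact absurd hk (by simp)
  | stay b' k' a hk' hpre hlt =>
    obtain ⟨-, rfl, rfl⟩ : false = s ∧ b' = b ∧ k' = k := by simpa using hk
    have := length_le_KB g b'
    omega
  | exact b' k' a hk' heq =>
    obtain ⟨-, rfl, rfl⟩ : false = s ∧ b' = b ∧ k' = k := by simpa using hk
    have := length_le_KB g b'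
    omega
  | overtake b' k' a hk' hpre hlt =>
    obtain ⟨-, rfl, rfl⟩ : false = s ∧ b' = b ∧ k' = k := by simpa using hk
    have := length_le_KB g b'
    omega

lemma mem_SR_of_step_right {ρ ρ' : RS σ} {a : σ} (h : Step g ρ a ρ') : ρ' ∈ SR g := by
  refine mem_SR g fun s b k hk => ?_
  cases h with
  | fromNone a =>
    obtain ⟨-, rfl, hk0⟩ : true = s ∧ a = b ∧ 0 = k := by simpa using hk
    omega
  | stay b' k' a hk' hpre hlt =>
    obtain ⟨-, rfl, rfl⟩ : false = s ∧ b' = b ∧ k' + (g a).length = k := by simpa using hk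
    have := length_le_KB g b'
    omega
  | exact b' k' a hk' heq => exact absurd hk (by simp)
  | overtake b' k' a hk' hpre hlt =>
    obtain ⟨-, rfl, rfl⟩ : true = s ∧ a = b ∧ (g b').length - k' = k := by simpa using hk
    have := length_le_KB g a
    omega

lemma mem_SR_flip {ρ : RS σ} (h : flipRS ρ ∈ SR g) : ρ ∈ SR g := by
  refine mem_SR g fun s b k hk => ?_
  subst hk
  rcases h with h | ⟨⟨s', b', k'⟩, ⟨-, -, hk'⟩, he⟩
  · simp [flipRS] at h
  · simp [flipRS] at he
    obtain ⟨-, -, rfl⟩ := he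
    exact hk'

def SN : Set (NT σ) := some '' ((Set.univ : Set Ph) ×ˢ SR g)

lemma SN_finite : (SN g).Finite := (Set.finite_univ.prod (SR_finite g)).image _

lemma mem_SN {i : Ph} {ρ : RS σ} (h : ρ ∈ SR g) : st i ρ ∈ SN g :=
  ⟨(i, ρ), ⟨trivial, h⟩, rfl⟩

def SO : Set (List (Sym σ)) :=
  insert []
    (((fun tn : Option σ × NT σ => [Symbol.terminal tn.1, Symbol.nonterminal tn.2]) ''
        ((Set.univ : Set (Option σ)) ×ˢ SN g)) ∪
      ((fun tn : Option σ × NT σ => [Symbol.nonterminal tn.2, Symbol.terminal tn.1]) ''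
        ((Set.univ : Set (Option σ)) ×ˢ SN g)))

lemma SO_finite : (SO g).Finite :=
  Set.Finite.insert _ (Set.Finite.union
    ((Set.finite_univ.prod (SN_finite g)).image _)
    ((Set.finite_univ.prod (SN_finite g)).image _))

lemma isRule_finite : {r | IsRule g r}.Finite := by
  refine Set.Finite.subset (((SN_finite g).prod (SO_finite g)).image
    (fun q : NT σ × List (Sym σ) => ⟨q.1, q.2⟩)) ?_
  rintro r hr
  have key : r.input ∈ SN g ∧ r.output ∈ SO g := by
    cases hr with
    | uv i hi a ρ ρ' hs =>
      refine ⟨mem_SN g (mem_SR_of_step_left g hs), Set.mem_insert_of_mem _ (Or.inl ?_)⟩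
      exact ⟨(some a, st (uvStep i) ρ'), ⟨trivial, mem_SN g (mem_SR_of_step_right g hs)⟩, rfl⟩
    | wm i a ρ ρ' hs =>
      refine ⟨mem_SN g (mem_SR_flip g (mem_SR_of_step_left g hs)),
        Set.mem_insert_of_mem _ (Or.inr ?_)⟩
      exact ⟨(some a, st i ρ'), ⟨trivial, mem_SN g (mem_SR_flip g (mem_SR_of_step_right g hs))⟩,
        rfl⟩
    | hash1 ρ hv =>
      refine ⟨mem_SN g (mem_SR_of_valid g hv), Set.mem_insert_of_mem _ (Or.inl ?_)⟩
      exact ⟨(none, st .v0 ρ), ⟨trivial, mem_SN g (mem_SR_of_valid g hv)⟩, rfl⟩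
    | hash2 ρ hv =>
      refine ⟨mem_SN g (mem_SR_of_valid g hv), Set.mem_insert_of_mem _ (Or.inl ?_)⟩
      exact ⟨(none, st .f2 ρ), ⟨trivial, mem_SN g (mem_SR_of_valid g hv)⟩, rfl⟩
    | fin =>
      exact ⟨mem_SN g (mem_SR g (by simp)), Set.mem_insert _ _⟩
  exact ⟨(r.input, r.output), key, rfl⟩

/-- The grammar. -/
@[reducible] noncomputable def Grm : ContextFreeGrammar (Option σ) :=
  ⟨NT σ, st .u0 none, (isRule_finite g).toFinset⟩

lemma mem_Grm_rules {r : ContextFreeRule (Option σ) (NT σ)} :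
    r ∈ (Grm g).rules ↔ IsRule g r := Set.Finite.mem_toFinset _

end Finiteness
def Shape : Ph → List (Option σ) → List σ → Prop
  | .u0, x, c => x = [] ∧ c = []
  | .u1, x, c => ∃ u, u ≠ [] ∧ x = u.map some ∧ c = u
  | .v0, x, c => ∃ u, u ≠ [] ∧ x = u.map some ++ [none] ∧ c = u
  | .v1, x, c => ∃ u v, u ≠ [] ∧ v ≠ [] ∧ x = u.map some ++ [none] ++ v.map some ∧ c = u ++ v
  | .f2, x, c =>
      ∃ u v, u ≠ [] ∧ v ≠ [] ∧ x = u.map some ++ [none] ++ v.map some ++ [none] ∧ c = u ++ v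

lemma shape_uv {i : Ph} {x : List (Option σ)} {c : List σ} {a : σ} (hi : i ≠ .f2)
    (h : Shape i x c) : Shape (uvStep i) (x ++ [some a]) (c ++ [a]) := by
  cases i with
  | u0 =>
    obtain ⟨rfl, rfl⟩ := h
    exact ⟨[a], by simp⟩
  | u1 =>
    obtain ⟨u, hu, rfl, hc⟩ := h
    subst hc
    exact ⟨c ++ [a], by simp [hu]⟩
  | v0 =>
    obtain ⟨u, hu, rfl, hc⟩ := h
    subst hc
    exact ⟨c, [a], hu, by simp⟩
  | v1 =>
    obtain ⟨u, v, hu, hv, rfl, hc⟩ := h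
    subst hc
    exact ⟨u, v ++ [a], hu, by simp [hv]⟩
  | f2 => exact absurd rfl hi

lemma shape_hash1 {x : List (Option σ)} {c : List σ} (h : Shape .u1 x c) :
    Shape .v0 (x ++ [none]) c := by
  obtain ⟨u, hu, rfl, hc⟩ := h
  subst hc
  exact ⟨c, hu, rfl, rfl⟩

lemma shape_hash2 {x : List (Option σ)} {c : List σ} (h : Shape .v1 x c) :
    Shape .f2 (x ++ [none]) c := by
  obtain ⟨u, v, hu, hv, rfl, hc⟩ := h
  subst hc
  exact ⟨u, v, hu, hv, by simp, rfl⟩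

def enc (l : List (Option σ)) : List (Sym σ) := l.map Symbol.terminal

@[simp] lemma enc_nil : enc ([] : List (Option σ)) = [] := rfl
@[simp] lemma enc_append (l l' : List (Option σ)) : enc (l ++ l') = enc l ++ enc l' :=
  List.map_append
@[simp] lemma enc_cons (o : Option σ) (l : List (Option σ)) :
    enc (o :: l) = Symbol.terminal o :: enc l := rfl

variable (g) in
def Good : NT σ → List (Option σ) → List (Option σ) → Prop
  | none, _, _ => False
  | some (i, ρ), x, y =>
      ∃ c p, Shape i x c ∧ y = (p.map some).reverse ∧ Bal g ρ (Hh g c) (Hh g p)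

lemma good_st {i : Ph} {ρ : RS σ} {x y : List (Option σ)} :
    Good g (st i ρ) x y ↔
      ∃ c p, Shape i x c ∧ y = (p.map some).reverse ∧ Bal g ρ (Hh g c) (Hh g p) :=
  Iff.rfl

lemma no_nt_in_terminal {l : List (Option σ)} {P Q : List (Sym σ)} {n : NT σ}
    (h : List.map Symbol.terminal l = P ++ [Symbol.nonterminal n] ++ Q) : False := by
  have hmem : (Symbol.nonterminal n : Sym σ) ∈ List.map Symbol.terminal l := by
    rw [h]; simp
  obtain ⟨o, -, ho⟩ := List.mem_map.1 hmem
  cases ho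

lemma nt_unique {x y : List (Option σ)} {P Q : List (Sym σ)} {n m : NT σ}
    (h : enc x ++ [Symbol.nonterminal n] ++ enc y = P ++ [Symbol.nonterminal m] ++ Q) :
    P = enc x ∧ m = n ∧ Q = enc y := by
  induction x generalizing P with
  | nil =>
    cases P with
    | nil =>
      simp only [enc_nil, List.nil_append, List.cons_append] at h
      obtain ⟨h1, h2⟩ := List.cons.injEq .. ▸ h
      exact ⟨rfl, (Symbol.nonterminal.injEq .. ▸ h1).symm, h2.symm⟩
    | cons s P' =>
      simp only [enc_nil, List.nil_append, List.cons_append] at h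
      obtain ⟨h1, h2⟩ := List.cons.injEq .. ▸ h
      exact absurd h2 (fun h2 => no_nt_in_terminal (l := y) (by simpa [enc] using h2))
  | cons o x' ih =>
    cases P with
    | nil =>
      simp only [enc_cons, List.cons_append, List.nil_append] at h
      obtain ⟨h1, -⟩ := List.cons.injEq .. ▸ h
      cases h1
    | cons s P' =>
      simp only [enc_cons, List.cons_append] at h
      obtain ⟨h1, h2⟩ := List.cons.injEq .. ▸ h
      obtain ⟨hP, hm, hQ⟩ := ih (by simpa using h2)
      cases h1
      exact ⟨by rw [hP]; rfl, hm, hQ⟩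
variable (g) in
def InvP (sf : List (Sym σ)) : Prop :=
  (∃ q x y, sf = enc x ++ [Symbol.nonterminal q] ++ enc y ∧ Good g q x y) ∨
  (∃ u v w : List σ, u ≠ [] ∧ v ≠ [] ∧ w ≠ [] ∧ Hh g u ++ Hh g v = Hh g w ∧
    sf = List.map Symbol.terminal (hashWord u v w))

lemma inv_step [Fintype σ] (hg : ∀ a, g a ≠ []) {sf sf' : List (Sym σ)}
    (h : InvP g sf) (hp : (Grm g).Produces sf sf') : InvP g sf' := by
  obtain ⟨r, hr, hrw⟩ := hp
  replace hr := (mem_Grm_rules g).1 hr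
  obtain ⟨P, Q, hPQ, rfl⟩ := hrw.exists_parts
  rcases h with ⟨q, x, y, rfl, hgood⟩ | ⟨u, v, w, hu, hv, hw, hH, rfl⟩
  · obtain ⟨rfl, rfl, rfl⟩ := nt_unique hPQ
    cases hr with
    | uv i hi a ρ ρ' hs =>
      obtain ⟨c, p, hsh, hy, hbal⟩ := hgood
      left
      refine ⟨st (uvStep i) ρ', x ++ [some a], y, by simp, ?_⟩
      exact ⟨c ++ [a], p, shape_uv hi hsh, hy, by simpa using step_bal hg hs hbal⟩
    | wm i a ρ ρ' hs =>
      obtain ⟨c, p, hsh, hy, hbal⟩ := hgood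
      left
      refine ⟨st i ρ', x, some a :: y, by simp, ?_⟩
      refine ⟨c, p ++ [a], hsh, by simp [hy], by simpa using wstep_bal hg hs hbal⟩
    | hash1 ρ hv =>
      obtain ⟨c, p, hsh, hy, hbal⟩ := hgood
      left
      refine ⟨st .v0 ρ, x ++ [none], y, by simp, ?_⟩
      exact ⟨c, p, shape_hash1 hsh, hy, hbal⟩
    | hash2 ρ hv =>
      obtain ⟨c, p, hsh, hy, hbal⟩ := hgood
      left
      refine ⟨st .f2 ρ, x ++ [none], y, by simp, ?_⟩
      exact ⟨c, p, shape_hash2 hsh, hy, hbal⟩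
    | fin =>
      obtain ⟨c, p, hsh, hy, hbal⟩ := hgood
      obtain ⟨u, v, hu, hv, hx, hc⟩ := hsh
      right
      subst hc
      have hH : Hh g u ++ Hh g v = Hh g p := by simpa [Bal] using hbal
      have hp : p ≠ [] := by
        intro hp
        subst hp
        exact Hh_ne_nil hg hu (List.append_eq_nil_iff.1 (by simpa using hH)).1
      refine ⟨u, v, p, hu, hv, hp, hH, ?_⟩
      subst hx hy
      simp [hashWord, enc, List.map_reverse]
  · exact absurd hPQ (fun hPQ => no_nt_in_terminal hPQ)

lemma sound [Fintype σ] (hg : ∀ a, g a ≠ []) {sf : List (Sym σ)}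
    (hD : (Grm g).Derives [Symbol.nonterminal (Grm g).initial] sf) : InvP g sf := by
  induction hD with
  | refl =>
    left
    refine ⟨st .u0 none, [], [], by simp [Grm], ?_⟩
    exact ⟨[], [], ⟨rfl, rfl⟩, by simp, rfl⟩
  | tail _ hlast ih => exact inv_step hg ih hlast
def Rem : Ph → List (Option σ) → Prop
  | .u0, E => ∃ u v : List σ, u ≠ [] ∧ v ≠ [] ∧ E = u.map some ++ none :: v.map some ++ [none]
  | .u1, E => ∃ u v : List σ, v ≠ [] ∧ E = u.map some ++ none :: v.map some ++ [none]
  | .v0, E => ∃ v : List σ, v ≠ [] ∧ E = v.map some ++ [none]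
  | .v1, E => ∃ v : List σ, E = v.map some ++ [none]
  | .f2, E => E = []

variable (g) in
def HE (E : List (Option σ)) : List Δ := Hh g (E.filterMap id)

@[simp] lemma HE_nil : HE g ([] : List (Option σ)) = [] := rfl
@[simp] lemma HE_cons_some (a : σ) (E : List (Option σ)) :
    HE g (some a :: E) = g a ++ HE g E := by simp [HE]
@[simp] lemma HE_cons_none (E : List (Option σ)) : HE g (none :: E) = HE g E := by simp [HE]

lemma drop_ne_nil {b : σ} {k : ℕ} (hk : k < (g b).length) : (g b).drop k ≠ [] := by
  have : 0 < ((g b).drop k).length := by simp; omega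
  exact List.length_pos_iff.1 this

lemma complete_core [Fintype σ] (hg : ∀ a, g a ≠ []) :
    ∀ (n : ℕ) (i : Ph) (ρ : RS σ) (E : List (Option σ)) (p : List σ),
      E.length + p.length ≤ n → Rem i E → Fut g ρ (HE g E) (Hh g p) →
      (Grm g).Derives [Symbol.nonterminal (st i ρ)]
        (enc E ++ enc ((p.map some).reverse)) := by
  have hfin : ∀ ρ : RS σ, ∀ p : List σ,
      (ρ = none ∨ ∃ b k, ρ = some (false, b, k)) →
      Fut g ρ (HE g ([] : List (Option σ))) (Hh g p) →
      (Grm g).Derives [Symbol.nonterminal (st Ph.f2 ρ)]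
        (enc ([] : List (Option σ)) ++ enc ((p.map some).reverse)) := by
    rintro ρ p (rfl | ⟨b, k, rfl⟩) hfut
    · have hp : p = [] := eq_nil_of_Hh hg (by simpa [Fut] using hfut.symm)
      subst hp
      refine Relation.ReflTransGen.single ?_
      exact ⟨⟨st Ph.f2 none, []⟩, (mem_Grm_rules g).2 IsRule.fin,
        by exact ContextFreeRule.Rewrites.input_output⟩
    · obtain ⟨hk, heq⟩ := hfut
      exact absurd (List.append_eq_nil_iff.1 (by simpa using heq.symm)).1 (drop_ne_nil hk)
  intro n
  induction n with
  | zero =>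
    intro i ρ E p hlen hrem hfut
    have hE : E = [] := List.length_eq_zero_iff.1 (by omega)
    have hp : p = [] := List.length_eq_zero_iff.1 (by omega)
    subst hE hp
    cases i with
    | f2 =>
      rcases ρ with _ | ⟨_ | _, b, k⟩
      · exact hfin none [] (Or.inl rfl) hfut
      · exact hfin _ [] (Or.inr ⟨b, k, rfl⟩) hfut
      · obtain ⟨hk, heq⟩ := hfut
        have hle : (g b).length ≤ k := by simpa using heq
        omega
    | u0 => obtain ⟨u, v, -, -, hE⟩ := hrem; simp at hE
    | u1 => obtain ⟨u, v, -, hE⟩ := hrem; simp at hE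
    | v0 => obtain ⟨v, -, hE⟩ := hrem; simp at hE
    | v1 => obtain ⟨v, hE⟩ := hrem; simp at hE
  | succ n ih =>
    intro i ρ E p hlen hrem hfut
    -- helper for uv-letter moves
    have huv : ∀ (i : Ph) (ρ : RS σ) (a : σ) (E' : List (Option σ)) (p : List σ),
        i ≠ .f2 → (ρ = none ∨ ∃ b k, ρ = some (false, b, k)) →
        Rem (uvStep i) E' → E'.length + p.length ≤ n →
        Fut g ρ (HE g (some a :: E')) (Hh g p) →
        (Grm g).Derives [Symbol.nonterminal (st i ρ)]
          (enc (some a :: E') ++ enc ((p.map some).reverse)) := by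
      intro i ρ a E' p hi hρ hrem hlen hfut
      rw [HE_cons_some] at hfut
      obtain ⟨ρ', hstep, hfut'⟩ := step_fut hg hρ hfut
      have hprod : (Grm g).Produces [Symbol.nonterminal (st i ρ)]
          ([Symbol.terminal (some a)] ++ [Symbol.nonterminal (st (uvStep i) ρ')]) :=
        ⟨⟨st i ρ, [.terminal (some a), .nonterminal (st (uvStep i) ρ')]⟩,
          (mem_Grm_rules g).2 (IsRule.uv i hi a ρ ρ' hstep),
          by exact ContextFreeRule.Rewrites.input_output⟩
      have hd := ih (uvStep i) ρ' E' p hlen hrem hfut'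
      have := hprod.trans_derives (hd.append_left [Symbol.terminal (some a)])
      simpa using this
    -- helper for hash moves
    have hhash : ∀ (i i' : Ph) (ρ : RS σ) (E' : List (Option σ)) (p : List σ),
        IsRule g ⟨st i ρ, [.terminal none, .nonterminal (st i' ρ)]⟩ →
        Rem i' E' → E'.length + p.length ≤ n →
        Fut g ρ (HE g E') (Hh g p) →
        (Grm g).Derives [Symbol.nonterminal (st i ρ)]
          (enc (none :: E') ++ enc ((p.map some).reverse)) := by
      intro i i' ρ E' p hrule hrem hlen hfut
      have hprod : (Grm g).Produces [Symbol.nonterminal (st i ρ)]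
          ([Symbol.terminal (none : Option σ)] ++ [Symbol.nonterminal (st i' ρ)]) :=
        ⟨⟨st i ρ, [.terminal none, .nonterminal (st i' ρ)]⟩,
          (mem_Grm_rules g).2 hrule,
          by exact ContextFreeRule.Rewrites.input_output⟩
      have hd := ih i' ρ E' p hlen hrem hfut
      have := hprod.trans_derives (hd.append_left [Symbol.terminal (none : Option σ)])
      simpa using this
    by_cases htrue : ∃ b k, ρ = some (true, b, k)
    · -- w-letter move
      obtain ⟨b, k, rfl⟩ := htrue
      obtain ⟨hk, heq⟩ := hfut
      have hp : p ≠ [] := by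
        intro hp
        subst hp
        exact drop_ne_nil hk (List.append_eq_nil_iff.1 (by simpa using heq)).1
      obtain ⟨a, p', rfl⟩ := List.exists_cons_of_ne_nil hp
      have hfut2 : Fut g (some (true, b, k)) (HE g E) (g a ++ Hh g p') := ⟨hk, by simpa using heq⟩
      obtain ⟨ρ', hstep, hfut'⟩ := wstep_fut hg rfl hfut2
      have hprod : (Grm g).Produces [Symbol.nonterminal (st i (some (true, b, k)))]
          ([Symbol.nonterminal (st i ρ')] ++ [Symbol.terminal (some a)]) :=
        ⟨⟨st i (some (true, b, k)), [.nonterminal (st i ρ'), .terminal (some a)]⟩,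
          (mem_Grm_rules g).2 (IsRule.wm i a _ ρ' hstep),
          by exact ContextFreeRule.Rewrites.input_output⟩
      have hd := ih i ρ' E p' (by simp at hlen ⊢; omega) hrem hfut'
      have := hprod.trans_derives (hd.append_right [Symbol.terminal (some a)])
      simpa [List.append_assoc] using this
    · have hρ : ρ = none ∨ ∃ b k, ρ = some (false, b, k) := by
        rcases ρ with _ | ⟨_ | _, b, k⟩
        · exact Or.inl rfl
        · exact Or.inr ⟨b, k, rfl⟩
        · exact absurd ⟨b, k, rfl⟩ htrue
      cases i with
      | u0 =>
        obtain ⟨u, v, hu, hv, rfl⟩ := hrem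
        obtain ⟨a, u', rfl⟩ := List.exists_cons_of_ne_nil hu
        have := huv .u0 ρ a (u'.map some ++ none :: v.map some ++ [none]) p (by simp) hρ
          ⟨u', v, hv, rfl⟩ (by simp at hlen ⊢; omega) (by simpa using hfut)
        simpa using this
      | u1 =>
        obtain ⟨u, v, hv, rfl⟩ := hrem
        cases u with
        | nil =>
          have := hhash .u1 .v0 ρ (v.map some ++ [none]) p (IsRule.hash1 ρ (fut_valid hfut))
            ⟨v, hv, rfl⟩ (by simp at hlen ⊢; omega) (by simpa using hfut)
          simpa using this
        | cons a u' =>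
          have := huv .u1 ρ a (u'.map some ++ none :: v.map some ++ [none]) p (by simp) hρ
            ⟨u', v, hv, rfl⟩ (by simp at hlen ⊢; omega) (by simpa using hfut)
          simpa using this
      | v0 =>
        obtain ⟨v, hv, rfl⟩ := hrem
        obtain ⟨a, v', rfl⟩ := List.exists_cons_of_ne_nil hv
        have := huv .v0 ρ a (v'.map some ++ [none]) p (by simp) hρ
          ⟨v', rfl⟩ (by simp at hlen ⊢; omega) (by simpa using hfut)
        simpa using this
      | v1 =>
        obtain ⟨v, rfl⟩ := hrem
        cases v with
        | nil =>
          have := hhash .v1 .f2 ρ [] p (IsRule.hash2 ρ (fut_valid hfut))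
            rfl (by simp at hlen ⊢; omega) (by simpa using hfut)
          simpa using this
        | cons a v' =>
          have := huv .v1 ρ a (v'.map some ++ [none]) p (by simp) hρ
            ⟨v', rfl⟩ (by simp at hlen ⊢; omega) (by simpa using hfut)
          simpa using this
      | f2 =>
        have hE : E = [] := hrem
        subst hE
        exact hfin ρ p hρ hfut
theorem Grm_language [Fintype σ] (hg : ∀ a, g a ≠ []) :
    (Grm g).language = { x : List (Option σ) | ∃ u v w : List σ, u ≠ [] ∧ v ≠ [] ∧ w ≠ [] ∧
      Hh g u ++ Hh g v = Hh g w ∧ x = hashWord u v w } := by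
  ext x
  rw [ContextFreeGrammar.mem_language_iff]
  constructor
  · intro hD
    rcases sound hg hD with ⟨q, x', y', heq, -⟩ | ⟨u, v, w, hu, hv, hw, hH, heq⟩
    · exact (no_nt_in_terminal (by simpa [enc] using heq)).elim
    · have hinj : Function.Injective (Symbol.terminal : Option σ → Sym σ) := by
        intro a b hab
        cases hab
        rfl
      exact ⟨u, v, w, hu, hv, hw, hH, List.map_injective_iff.2 hinj heq⟩
  · rintro ⟨u, v, w, hu, hv, hw, hH, rfl⟩
    have hrem : Rem .u0 (u.map some ++ none :: v.map some ++ [none]) := ⟨u, v, hu, hv, rfl⟩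
    have hfut : Fut g none (HE g (u.map some ++ none :: v.map some ++ [none])) (Hh g w) := by
      show HE g _ = Hh g w
      have hfm : (u.map some ++ none :: v.map some ++ [none]).filterMap id = u ++ v := by
        simp [List.filterMap_append]
      rw [HE, hfm, Hh_append, hH]
    have := complete_core hg
      ((u.map some ++ none :: v.map some ++ [none]).length + w.length)
      .u0 none _ w le_rfl hrem hfut
    have hini : (Grm g).initial = st Ph.u0 none := rfl
    rw [hini]
    simpa [hashWord, enc, List.map_reverse, List.append_assoc] using this

end WH
/-- Every finitely generated subsemigroup of a free semigroup is word
hyperbolic. -/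
theorem fg_subsemigroup_of_free_wordHyperbolic (Δ : Type*) {σ : Type} [Fintype σ]
    (h : σ → FreeSemigroup Δ) :
    WordHyperbolic (Subsemigroup.closure (Set.range h)) := by
  classical
  set S := Subsemigroup.closure (Set.range h) with hSdef
  let toL : FreeSemigroup Δ → List Δ := fun x => x.head :: x.tail
  have toL_mul : ∀ x y : FreeSemigroup Δ, toL (x * y) = toL x ++ toL y := fun x y => rfl
  have toL_inj : Function.Injective toL := by
    intro x y hxy
    obtain ⟨hx, tx⟩ := x
    obtain ⟨hy, ty⟩ := y
    simpa [toL] using hxy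
  let g : σ → List Δ := fun a => toL (h a)
  have hg : ∀ a, g a ≠ [] := fun a => List.cons_ne_nil _ _
  let f : σ → S := fun a => ⟨h a, Subsemigroup.subset_closure (Set.mem_range_self a)⟩
  have hfoldl : ∀ (as : List σ) (s : S),
      toL ((as.foldl (fun t b => t * f b) s : S) : FreeSemigroup Δ) =
        toL (s : FreeSemigroup Δ) ++ WH.Hh g as := by
    intro as
    induction as with
    | nil => intro s; simp
    | cons a as ih =>
      intro s
      rw [List.foldl_cons, ih, WH.Hh_cons]
      have hcoe : ((s * f a : S) : FreeSemigroup Δ) = (s : FreeSemigroup Δ) * (f a : FreeSemigroup Δ) := rfl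
      rw [hcoe, toL_mul]
      simp only [List.append_assoc]; rfl
  have hevalS : ∀ (c : List σ), c ≠ [] → ∃ s : S, evalS f c = some s ∧
      toL (s : FreeSemigroup Δ) = WH.Hh g c := by
    intro c hc
    cases c with
    | nil => exact absurd rfl hc
    | cons a as =>
      refine ⟨as.foldl (fun t b => t * f b) (f a), rfl, ?_⟩
      rw [hfoldl as (f a), WH.Hh_cons]
  have hSval_inj : ∀ s t : S, toL (s : FreeSemigroup Δ) = toL (t : FreeSemigroup Δ) → s = t :=
    fun s t hst => Subtype.ext (toL_inj hst)
  have hrep : ∀ x, x ∈ S → ∃ c : List σ, c ≠ [] ∧ WH.Hh g c = toL x := by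
    intro x hx
    induction hx using Subsemigroup.closure_induction with
    | mem y hy =>
      obtain ⟨a, rfl⟩ := hy
      exact ⟨[a], by simp, by simp [WH.Hh]; rfl⟩
    | mul x y hx hy ihx ihy =>
      obtain ⟨c, hc, hHc⟩ := ihx
      obtain ⟨d, hd, hHd⟩ := ihy
      refine ⟨c ++ d, by simp [hc], ?_⟩
      rw [WH.Hh_append, hHc, hHd, toL_mul]
  have hchoice : IsChoice f := by
    intro s
    obtain ⟨c, hc, hHc⟩ := hrep s.1 s.2
    obtain ⟨t, hev, hTt⟩ := hevalS c hc
    refine ⟨c, ?_⟩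
    rw [hev, hSval_inj t s (by rw [hTt, hHc])]
  let R : Language σ := {w | w ≠ []}
  have hreg : R.IsRegular := by
    refine ⟨Bool, inferInstance, ⟨fun _ _ => true, false, {true}⟩, ?_⟩
    have hev : ∀ (w : List σ), DFA.evalFrom ⟨fun _ _ => true, false, {true}⟩ true w = true := by
      intro w
      induction w with
      | nil => rfl
      | cons a w ih => simpa [DFA.evalFrom] using ih
    ext w
    rw [DFA.mem_accepts]
    cases w with
    | nil =>
      simp only [DFA.eval, DFA.evalFrom, List.foldl_nil]
      exact ⟨fun hb => absurd hb (by simp), fun hb => absurd rfl hb⟩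
    | cons a w =>
      have hval : DFA.eval ⟨fun _ _ => true, false, {true}⟩ (a :: w) = true := by
        simpa [DFA.eval, DFA.evalFrom] using hev w
      simp only [hval]
      exact ⟨fun _ => List.cons_ne_nil a w, fun _ => rfl⟩
  have hcomb : IsCombing f R := by
    constructor
    · intro hmem
      exact hmem rfl
    · intro s
      obtain ⟨c, hc, hHc⟩ := hrep s.1 s.2
      obtain ⟨t, hev, hTt⟩ := hevalS c hc
      refine ⟨c, hc, ?_⟩
      rw [hev, hSval_inj t s (by rw [hTt, hHc])]
  have htable : mulTable f R = (WH.Grm g).language := by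
    rw [WH.Grm_language hg]
    ext x
    constructor
    · rintro ⟨u, v, w, hu, hv, hw, ⟨su, sv, hsu, hsv, hsw⟩, rfl⟩
      obtain ⟨su', hevu, hTu⟩ := hevalS u hu
      obtain ⟨sv', hevv, hTv⟩ := hevalS v hv
      obtain ⟨sw', hevw, hTw⟩ := hevalS w hw
      have e1 : su' = su := Option.some_injective _ (hevu.symm.trans hsu)
      have e2 : sv' = sv := Option.some_injective _ (hevv.symm.trans hsv)
      have e3 : sw' = su * sv := Option.some_injective _ (hevw.symm.trans hsw)
      refine ⟨u, v, w, hu, hv, hw, ?_, rfl⟩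
      rw [← hTu, ← hTv, ← hTw, e1, e2, e3]
      exact (toL_mul _ _).symm
    · rintro ⟨u, v, w, hu, hv, hw, hH, rfl⟩
      obtain ⟨su, hevu, hTu⟩ := hevalS u hu
      obtain ⟨sv, hevv, hTv⟩ := hevalS v hv
      obtain ⟨sw, hevw, hTw⟩ := hevalS w hw
      have e : sw = su * sv := hSval_inj _ _ (by
        rw [hTw, ← hH, ← hTu, ← hTv]
        exact (toL_mul _ _).symm)
      refine ⟨u, v, w, hu, hv, hw, ⟨su, sv, hevu, hevv, ?_⟩, rfl⟩
      rw [hevw, e]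
  exact ⟨σ, inferInstance, f, hchoice, R, hreg, hcomb, WH.Grm g, htable.symm⟩
end
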